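/- arXiv:2111.02342 — 4 statements merged into one kernel-verified Lean document; each statement's English description precedes it below -/
import Mathlib

section
/- Suppose rank[Z(k); U(k)] = n+m for k = 0,…,T−1 and that R(k) = A(k)V(k) − V(k+1) − D(k) satisfies the signal-to-noise-ratio bound R(k)R(k)ᵀ ⪯ (1/γ(k))·Z(k+1)Z(k+1)ᵀ for k = 0,…,T−1, where γ(k) > 0. Let η ≥ 1 and ρ > η be finite constants, and suppose Y(k) ∈ ℝ^{L×n}, symmetric P(k) and scalars a(k) with 0 ≤ a(k) ≤ γ(k) satisfy: (i) the 3×3 block matrix [[P(k+1) − I_n − Z(k+1)Z(k+1)ᵀ, 0, Z(k+1)Y(k)], [0, a(k)I_L, Y(k)], [Y(k)ᵀZ(k+1)ᵀ, Y(k)ᵀ, P(k)]] ≻ 0 and Z(k)Y(k) = P(k) for k = 0,…,T−1; (ii) ηI_n ⪯ P(k) ⪯ ρI_n for k = 0,…,T. Let b be such that ‖B(j)‖ ≤ b for j = 0,…,T−1, and set K(k) = U(k)Y(k)P(k)^{−1}. Then every trajectory of x(k+1) = (A(k)+B(k)K(k))x(k) + B(k)K(k)v(k) + d(k) satisfies,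 for k = 0,…,T: ‖x(k)‖ ≤ √(ρ/η)·(1 − 1/ρ)^{k/2}·‖x(0)‖ + b·(Σ_{j=0}^{k−1} √(ρ/η)·(1 − 1/ρ)^{(k−1−j)/2}·‖K(j)‖)·|v|_{k−1} + (Σ_{j=0}^{k−1} √(ρ/η)·(1 − 1/ρ)^{(k−1−j)/2})·|d|_{k−1}, with |v|_{k−1} = sup{‖v(j)‖ : 0 ≤ j ≤ k−1} and |d|_{k−1} = sup{‖d(j)‖ : 0 ≤ j ≤ k−1}. -/
/-!
Write `W_k(x) = √(xᵀ P(k)⁻¹ x)` and `M_k = A(k) + B(k) K(k)`. The data equation gives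
`M_k P(k) = (Z(k+1) + R(k)) Y(k)`, so a Schur complement of the LMI with respect to `P(k)`,
conjugated by `[I R(k)]` and combined with the SNR bound, yields `M_k P(k) M_kᵀ ⪯ P(k+1) - I`.
With `P(k+1) ⪯ ρ I` this becomes `M_k P(k) M_kᵀ ⪯ (1 - 1/ρ) P(k+1)`, which is equivalent to
`M_kᵀ P(k+1)⁻¹ M_k ⪯ (1 - 1/ρ) P(k)⁻¹`. Hence `W` contracts by `√(1 - 1/ρ)` along the closed
loop, while the disturbance `B K v + d` raises it by at most its norm over `√η`. Iterating and
comparing `W` with the Euclidean norm through `η I ⪯ P ⪯ ρ I` gives the bound.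
-/

open Matrix

/-- Action of a real matrix on a Euclidean-space vector. -/
noncomputable def matVec {n m : ℕ} (M : Matrix (Fin n) (Fin m) ℝ)
    (v : EuclideanSpace ℝ (Fin m)) : EuclideanSpace ℝ (Fin n) :=
  (WithLp.equiv 2 (Fin n → ℝ)).symm (M.mulVec (fun i => v i))

/-- Induced 2-norm (operator norm) of a real matrix. -/
noncomputable def opNorm2 {n m : ℕ} (M : Matrix (Fin n) (Fin m) ℝ) : ℝ :=
  ‖LinearMap.toContinuousLinearMap (Matrix.toEuclideanLin M)‖

namespace Matrix

/-- Both PSD conditions are Schur complements of the block matrix `[[c A, B], [Bᵀ, D⁻¹]]`. -/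
theorem PosDef.posSemidef_smul_inv_sub_of_posSemidef_smul_sub {m n : Type*} [Fintype m]
    [Fintype n] [DecidableEq m] [DecidableEq n] {A : Matrix m m ℝ} {D : Matrix n n ℝ}
    (hA : A.PosDef) (hD : D.PosDef) {c : ℝ} (hc : 0 < c) {B : Matrix m n ℝ}
    (h : (c • A - B * D * Bᵀ).PosSemidef) : (c • D⁻¹ - Bᵀ * A⁻¹ * B).PosSemidef := by
  have hcA := hA.smul hc
  have := hA.isUnit.invertible
  have := hcA.isUnit.invertible
  have := hD.isUnit.invertible
  have := hD.inv.isUnit.invertible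
  have hblock : (fromBlocks (c • A) B Bᴴ D⁻¹).PosSemidef := by
    rwa [PosDef.fromBlocks₂₂ _ _ hD.inv, inv_inv_of_invertible,
      conjTranspose_eq_transpose_of_trivial]
  have hinv : (c • A)⁻¹ = c⁻¹ • A⁻¹ := inv_eq_left_inv <| by
    rw [smul_mul_smul_comm, inv_mul_cancel₀ hc.ne', inv_mul_of_invertible, one_smul]
  rw [PosDef.fromBlocks₁₁ _ _ hcA, conjTranspose_eq_transpose_of_trivial, hinv] at hblock
  have hscale : c • D⁻¹ - Bᵀ * A⁻¹ * B = c • (D⁻¹ - Bᵀ * c⁻¹ • A⁻¹ * B) := by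
    rw [smul_sub, Matrix.mul_smul, Matrix.smul_mul, smul_smul, mul_inv_cancel₀ hc.ne', one_smul]
  rw [hscale]
  exact hblock.smul hc.le

theorem PosSemidef.posDef_of_sub_smul_one {n : Type*} [DecidableEq n] {P : Matrix n n ℝ}
    {η : ℝ} (hη : 0 < η) (h : (P - η • 1).PosSemidef) : P.PosDef := by
  simpa using PosDef.posSemidef_add h (PosDef.one.smul hη)

theorem PosSemidef.smul_sub_of_sub_one_sub {n : Type*} [DecidableEq n] {P Q : Matrix n n ℝ}
    {ρ : ℝ} (hρ : 0 < ρ) (hQ : (P - 1 - Q).PosSemidef) (hP : (ρ • 1 - P).PosSemidef) :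
    ((1 - 1 / ρ) • P - Q).PosSemidef := by
  have hsplit : (1 - 1 / ρ) • P - Q = (P - 1 - Q) + ρ⁻¹ • (ρ • 1 - P) := by
    rw [smul_sub, smul_smul, inv_mul_cancel₀ hρ.ne', one_smul, sub_smul, one_smul, one_div]
    abel
  rw [hsplit]
  exact hQ.add (hP.smul (inv_nonneg.2 hρ.le))

end Matrix

section QuadNorm

variable {n : Type*} [Fintype n]

noncomputable def quadNorm (Q : Matrix n n ℝ) (x : EuclideanSpace ℝ n) : ℝ :=
  √(x.ofLp ⬝ᵥ Q *ᵥ x.ofLp)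

theorem quadNorm_one [DecidableEq n] (x : EuclideanSpace ℝ n) : quadNorm 1 x = ‖x‖ := by
  simp [quadNorm, EuclideanSpace.norm_eq, dotProduct, sq]

theorem quadNorm_smul {c : ℝ} (hc : 0 ≤ c) (Q : Matrix n n ℝ) (x : EuclideanSpace ℝ n) :
    quadNorm (c • Q) x = √c * quadNorm Q x := by
  rw [quadNorm, quadNorm, smul_mulVec, dotProduct_smul, smul_eq_mul, Real.sqrt_mul hc]

theorem quadNorm_le_quadNorm {Q₁ Q₂ : Matrix n n ℝ} (h : (Q₂ - Q₁).PosSemidef)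
    (x : EuclideanSpace ℝ n) : quadNorm Q₁ x ≤ quadNorm Q₂ x := by
  have := h.dotProduct_mulVec_nonneg x.ofLp
  rw [star_trivial, sub_mulVec, dotProduct_sub, sub_nonneg] at this
  exact Real.sqrt_le_sqrt this

/-- Writing `Q = Sᵀ S`, `quadNorm Q x` is the Euclidean norm of `S x`. -/
theorem quadNorm_add_le [DecidableEq n] {Q : Matrix n n ℝ} (hQ : Q.PosSemidef)
    (x y : EuclideanSpace ℝ n) : quadNorm Q (x + y) ≤ quadNorm Q x + quadNorm Q y := by
  open scoped MatrixOrder in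
  obtain ⟨S, rfl⟩ := CStarAlgebra.nonneg_iff_eq_star_mul_self.mp hQ.nonneg
  have hS (z : EuclideanSpace ℝ n) :
      quadNorm (star S * S) z = ‖WithLp.toLp 2 (S *ᵥ z.ofLp)‖ := by
    rw [← quadNorm_one, quadNorm, quadNorm, ← mulVec_mulVec, dotProduct_mulVec,
      star_eq_conjTranspose, conjTranspose_eq_transpose_of_trivial, vecMul_transpose, one_mulVec]
  simpa only [hS, WithLp.ofLp_add, mulVec_add, WithLp.toLp_add] using norm_add_le _ _

end QuadNorm

theorem matVec_mul {n m l : ℕ} (A : Matrix (Fin n) (Fin m) ℝ) (B : Matrix (Fin m) (Fin l) ℝ)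
    (x : EuclideanSpace ℝ (Fin l)) : matVec (A * B) x = matVec A (matVec B x) := by
  simp [matVec, mulVec_mulVec]

theorem norm_matVec_le {n m : ℕ} (M : Matrix (Fin n) (Fin m) ℝ) (x : EuclideanSpace ℝ (Fin m)) :
    ‖matVec M x‖ ≤ opNorm2 M * ‖x‖ :=
  (LinearMap.toContinuousLinearMap (toEuclideanLin M)).le_opNorm x

theorem norm_matVec_mul_add_le {n m : ℕ} {B : Matrix (Fin n) (Fin m) ℝ} {b : ℝ}
    (hB : opNorm2 B ≤ b) (K : Matrix (Fin m) (Fin n) ℝ) (v d : EuclideanSpace ℝ (Fin n)) :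
    ‖matVec (B * K) v + d‖ ≤ b * opNorm2 K * ‖v‖ + ‖d‖ := by
  have hB0 : 0 ≤ opNorm2 B := norm_nonneg _
  have hKv : 0 ≤ opNorm2 K * ‖v‖ := mul_nonneg (norm_nonneg _) (norm_nonneg _)
  calc ‖matVec (B * K) v + d‖ ≤ opNorm2 B * (opNorm2 K * ‖v‖) + ‖d‖ := by
        rw [matVec_mul]
        grw [norm_add_le, norm_matVec_le, norm_matVec_le]
    _ ≤ b * opNorm2 K * ‖v‖ + ‖d‖ := by
        rw [mul_assoc]
        gcongr

theorem quadNorm_matVec {m n : ℕ} (Q : Matrix (Fin m) (Fin m) ℝ) (M : Matrix (Fin m) (Fin n) ℝ)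
    (x : EuclideanSpace ℝ (Fin n)) : quadNorm Q (matVec M x) = quadNorm (Mᵀ * Q * M) x := by
  rw [quadNorm, quadNorm, ← mulVec_mulVec, ← mulVec_mulVec, dotProduct_mulVec _ _ (Q *ᵥ _),
    ← mulVec_transpose]
  rfl

section Lyapunov

variable {n : ℕ} {P : Matrix (Fin n) (Fin n) ℝ}

theorem quadNorm_inv_le {η : ℝ} (hη : 0 < η) (hP : (P - η • 1).PosSemidef)
    (x : EuclideanSpace ℝ (Fin n)) : quadNorm P⁻¹ x ≤ (√η)⁻¹ * ‖x‖ := by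
  have hswap := (hP.posDef_of_sub_smul_one hη).posSemidef_smul_inv_sub_of_posSemidef_smul_sub
    (PosDef.one (n := Fin n)) (inv_pos.2 hη) (B := 1)
    (by simpa [smul_sub, hη.ne'] using hP.smul (inv_nonneg.2 hη.le))
  simpa [quadNorm_smul (inv_nonneg.2 hη.le), quadNorm_one, Real.sqrt_inv] using
    quadNorm_le_quadNorm hswap x

theorem norm_le_quadNorm_inv {ρ : ℝ} (hρ : 0 < ρ) (hP : P.PosDef) (hPρ : (ρ • 1 - P).PosSemidef)
    (x : EuclideanSpace ℝ (Fin n)) : ‖x‖ ≤ √ρ * quadNorm P⁻¹ x := by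
  have hswap := (PosDef.one (n := Fin n)).posSemidef_smul_inv_sub_of_posSemidef_smul_sub hP hρ
    (B := (1 : Matrix (Fin n) (Fin n) ℝ)) (by simpa using hPρ)
  simpa [quadNorm_smul hρ.le, quadNorm_one] using quadNorm_le_quadNorm hswap x

theorem quadNorm_inv_matVec_add_le {P' M : Matrix (Fin n) (Fin n) ℝ} (hP : P.PosDef)
    {c η : ℝ} (hc : 0 < c) (hη : 0 < η) (hP' : (P' - η • 1).PosSemidef)
    (hM : (c • P' - M * P * Mᵀ).PosSemidef) (x w : EuclideanSpace ℝ (Fin n)) :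
    quadNorm P'⁻¹ (matVec M x + w) ≤ √c * quadNorm P⁻¹ x + (√η)⁻¹ * ‖w‖ := by
  have hP'pos := hP'.posDef_of_sub_smul_one hη
  calc quadNorm P'⁻¹ (matVec M x + w) ≤ quadNorm P'⁻¹ (matVec M x) + quadNorm P'⁻¹ w :=
        quadNorm_add_le hP'pos.inv.posSemidef _ _
    _ ≤ √c * quadNorm P⁻¹ x + (√η)⁻¹ * ‖w‖ := by
        gcongr
        · rw [quadNorm_matVec, ← quadNorm_smul hc.le]
          exact quadNorm_le_quadNorm
            (hP'pos.posSemidef_smul_inv_sub_of_posSemidef_smul_sub hP hc hM) x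
        · exact quadNorm_inv_le hη hP' w

end Lyapunov

section DataDriven

variable {n L : Type*} [Fintype n] [Fintype L]

theorem posSemidef_mul_transpose_sub_smul_of_snr {Z R : Matrix n L ℝ} {a γ : ℝ}
    (hSNR : ((1 / γ) • (Z * Zᵀ) - R * Rᵀ).PosSemidef) (hγ : 0 < γ) (ha : 0 ≤ a) (haγ : a ≤ γ) :
    (Z * Zᵀ - a • (R * Rᵀ)).PosSemidef := by
  have hZZ : ((1 - a / γ) • (Z * Zᵀ)).PosSemidef :=
    (posSemidef_self_mul_conjTranspose Z).smul (by rw [sub_nonneg, div_le_one hγ]; exact haγ)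
  have hsplit : Z * Zᵀ - a • (R * Rᵀ) =
      a • ((1 / γ) • (Z * Zᵀ) - R * Rᵀ) + (1 - a / γ) • (Z * Zᵀ) := by
    rw [smul_sub, smul_smul, sub_smul, one_smul, mul_one_div]
    abel
  rw [hsplit]
  exact (hSNR.smul ha).add hZZ

/-- Take the Schur complement of the LMI with respect to `P` and conjugate it by `[I R]`. -/
theorem posSemidef_sub_one_sub_of_lmi [DecidableEq n] [DecidableEq L] {P P' M : Matrix n n ℝ}
    {Z' R : Matrix n L ℝ} {Y : Matrix L n ℝ} {a γ : ℝ} (hP : P.PosDef)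
    (hLMI : (fromBlocks (fromBlocks (P' - 1 - Z' * Z'ᵀ) 0 0 (a • 1))
      (fromRows (Z' * Y) Y) (fromCols (Yᵀ * Z'ᵀ) Yᵀ) P).PosSemidef)
    (hSNR : ((1 / γ) • (Z' * Z'ᵀ) - R * Rᵀ).PosSemidef) (hγ : 0 < γ) (ha : 0 ≤ a)
    (haγ : a ≤ γ) (hMP : M * P = (Z' + R) * Y) :
    (P' - 1 - M * P * Mᵀ).PosSemidef := by
  have := hP.isUnit.invertible
  have hcols : fromCols (Yᵀ * Z'ᵀ) Yᵀ = (fromRows (Z' * Y) Y)ᴴ := by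
    rw [conjTranspose_fromRows_eq_fromCols_conjTranspose, conjTranspose_eq_transpose_of_trivial,
      conjTranspose_eq_transpose_of_trivial, transpose_mul]
  rw [hcols, PosDef.fromBlocks₂₂ _ _ hP, ← hcols] at hLMI
  set E : Matrix n (n ⊕ L) ℝ := fromCols 1 R
  have hEW : E * fromRows (Z' * Y) Y = M * P := by
    rw [fromCols_mul_fromRows, Matrix.one_mul, hMP, Matrix.add_mul]
  have hWE : fromCols (Yᵀ * Z'ᵀ) Yᵀ * Eᴴ = (M * P)ᵀ := by
    rw [← hEW, conjTranspose_eq_transpose_of_trivial, transpose_mul, transpose_fromRows,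
      transpose_mul]
  have hEDE : E * fromBlocks (P' - 1 - Z' * Z'ᵀ) 0 0 (a • (1 : Matrix L L ℝ)) * Eᴴ =
      P' - 1 - Z' * Z'ᵀ + a • (R * Rᵀ) := by
    rw [conjTranspose_eq_transpose_of_trivial, transpose_fromCols, fromCols_mul_fromBlocks,
      fromCols_mul_fromRows]
    simp
  have hPsymm : Pᵀ = P := by simpa using hP.isHermitian.eq
  have hsum : P' - 1 - M * P * Mᵀ =
      E * (fromBlocks (P' - 1 - Z' * Z'ᵀ) 0 0 (a • 1) -
        fromRows (Z' * Y) Y * P⁻¹ * fromCols (Yᵀ * Z'ᵀ) Yᵀ) * Eᴴ +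
      (Z' * Z'ᵀ - a • (R * Rᵀ)) := by
    rw [Matrix.mul_sub, Matrix.sub_mul, hEDE]
    simp only [← Matrix.mul_assoc]
    rw [hEW, Matrix.mul_assoc _ (fromCols _ _), hWE, transpose_mul, hPsymm, Matrix.mul_assoc M,
      Matrix.mul_inv_cancel_right_of_invertible]
    abel
  rw [hsum]
  exact (hLMI.mul_mul_conjTranspose_same E).add
    (posSemidef_mul_transpose_sub_smul_of_snr hSNR hγ ha haγ)

theorem closedLoop_mul_eq_of_data {m : Type*} [Fintype m] {A P : Matrix n n ℝ}
    {B : Matrix n m ℝ} {K : Matrix m n ℝ} {U : Matrix m L ℝ} {X V D X' V' Z Z' R : Matrix n L ℝ}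
    {Y : Matrix L n ℝ} (hZ : Z = X + V) (hZ' : Z' = X' + V') (hX' : X' = A * X + B * U + D)
    (hR : R = A * V - V' - D) (hZY : Z * Y = P) (hKP : K * P = U * Y) :
    (A + B * K) * P = (Z' + R) * Y := by
  rw [Matrix.add_mul, Matrix.mul_assoc, hKP, ← hZY, ← Matrix.mul_assoc, ← Matrix.mul_assoc,
    ← Matrix.add_mul, hZ', hX', hR, hZ, Matrix.mul_add]
  abel_nf

theorem posSemidef_smul_sub_closedLoop_of_lmi [DecidableEq n] [DecidableEq L] {m : Type*}
    [Fintype m] {A P P' : Matrix n n ℝ} {B : Matrix n m ℝ} {K : Matrix m n ℝ} {U : Matrix m L ℝ}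
    {X V D X' V' Z Z' R : Matrix n L ℝ} {Y : Matrix L n ℝ} {a γ ρ : ℝ} (hP : P.PosDef)
    (hZ : Z = X + V) (hZ' : Z' = X' + V') (hX' : X' = A * X + B * U + D)
    (hR : R = A * V - V' - D) (hZY : Z * Y = P) (hK : K = U * Y * P⁻¹)
    (hLMI : (fromBlocks (fromBlocks (P' - 1 - Z' * Z'ᵀ) 0 0 (a • 1))
      (fromRows (Z' * Y) Y) (fromCols (Yᵀ * Z'ᵀ) Yᵀ) P).PosSemidef)
    (hSNR : ((1 / γ) • (Z' * Z'ᵀ) - R * Rᵀ).PosSemidef) (hγ : 0 < γ) (ha : 0 ≤ a)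
    (haγ : a ≤ γ) (hρ : 0 < ρ) (hP' : (ρ • 1 - P').PosSemidef) :
    ((1 - 1 / ρ) • P' - (A + B * K) * P * (A + B * K)ᵀ).PosSemidef := by
  have hKP : K * P = U * Y := by
    rw [hK, nonsing_inv_mul_cancel_right _ _ (isUnit_iff_ne_zero.2 hP.det_pos.ne')]
  have hMP := closedLoop_mul_eq_of_data hZ hZ' hX' hR hZY hKP
  exact (posSemidef_sub_one_sub_of_lmi hP hLMI hSNR hγ ha haγ hMP).smul_sub_of_sub_one_sub hρ hP'

end DataDriven

theorem le_pow_mul_add_sum_of_le_mul_add {s u : ℕ → ℝ} {θ : ℝ} (hθ : 0 ≤ θ) {k : ℕ}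
    (h : ∀ j < k, s (j + 1) ≤ θ * s j + u j) :
    s k ≤ θ ^ k * s 0 + ∑ j ∈ Finset.range k, θ ^ (k - 1 - j) * u j := by
  induction k with
  | zero => simp
  | succ k ih =>
    have ih := ih fun j hj => h j (by omega)
    calc s (k + 1) ≤ θ * s k + u k := h k (by omega)
      _ ≤ θ * (θ ^ k * s 0 + ∑ j ∈ Finset.range k, θ ^ (k - 1 - j) * u j) + u k := by gcongr
      _ = θ ^ (k + 1) * s 0 + ∑ j ∈ Finset.range (k + 1), θ ^ (k + 1 - 1 - j) * u j := by
        have hpow : ∀ j ∈ Finset.range k,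
            θ * (θ ^ (k - 1 - j) * u j) = θ ^ (k - j) * u j := fun j hj => by
          rw [← mul_assoc, ← pow_succ']
          congr 2
          have := Finset.mem_range.1 hj
          omega
        rw [Finset.sum_range_succ, Nat.add_sub_cancel, Nat.sub_self, mul_add, Finset.mul_sum,
          Finset.sum_congr rfl hpow, pow_succ']
        ring

theorem le_ciSup_fin (f : ℕ → ℝ) {j k : ℕ} (hj : j < k) : f j ≤ ⨆ i : Fin k, f i :=
  le_ciSup (f := fun i : Fin k => f i) (Set.finite_range _).bddAbove ⟨j, hj⟩

theorem Real.sqrt_pow {x : ℝ} (hx : 0 ≤ x) (k : ℕ) : √(x ^ k) = √x ^ k := by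
  rw [Real.sqrt_eq_iff_eq_sq (by positivity) (by positivity), ← pow_mul, mul_comm, pow_mul,
    Real.sq_sqrt hx]

theorem robust_bounded_trajectories_SNR_general
    {n m L T : ℕ}
    (A : ℕ → Matrix (Fin n) (Fin n) ℝ) (B : ℕ → Matrix (Fin n) (Fin m) ℝ)
    (X V Z : ℕ → Matrix (Fin n) (Fin L) ℝ)
    (U : ℕ → Matrix (Fin m) (Fin L) ℝ)
    (D : ℕ → Matrix (Fin n) (Fin L) ℝ)
    (hZ : ∀ k, Z k = X k + V k)
    (hdata : ∀ k < T, X (k + 1) = A k * X k + B k * U k + D k)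
    (R : ℕ → Matrix (Fin n) (Fin L) ℝ)
    (hR : ∀ k < T, R k = A k * V k - V (k + 1) - D k)
    (γ : ℕ → ℝ) (hγ : ∀ k < T, 0 < γ k)
    (hSNR : ∀ k < T,
      ((1 / γ k) • (Z (k + 1) * (Z (k + 1))ᵀ) - R k * (R k)ᵀ).PosSemidef)
    (η ρ : ℝ) (hη : 1 ≤ η) (hρ : η < ρ)
    (Y : ℕ → Matrix (Fin L) (Fin n) ℝ) (P : ℕ → Matrix (Fin n) (Fin n) ℝ)
    (a : ℕ → ℝ) (ha : ∀ k < T, 0 ≤ a k ∧ a k ≤ γ k)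
    (hLMI : ∀ k < T,
      (Matrix.fromBlocks
        (Matrix.fromBlocks (P (k + 1) - 1 - Z (k + 1) * (Z (k + 1))ᵀ)
          (0 : Matrix (Fin n) (Fin L) ℝ)
          (0 : Matrix (Fin L) (Fin n) ℝ)
          (a k • (1 : Matrix (Fin L) (Fin L) ℝ)))
        (Matrix.fromRows (Z (k + 1) * Y k) (Y k))
        (Matrix.fromCols ((Y k)ᵀ * (Z (k + 1))ᵀ) ((Y k)ᵀ))
        (P k)).PosDef)
    (heq : ∀ k < T, Z k * Y k = P k)
    (hPlow : ∀ k ≤ T, (P k - η • (1 : Matrix (Fin n) (Fin n) ℝ)).PosSemidef)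
    (hPhigh : ∀ k ≤ T, (ρ • (1 : Matrix (Fin n) (Fin n) ℝ) - P k).PosSemidef)
    (b : ℝ) (hb : ∀ j < T, opNorm2 (B j) ≤ b)
    (K : ℕ → Matrix (Fin m) (Fin n) ℝ)
    (hK : ∀ k < T, K k = U k * Y k * (P k)⁻¹) :
    ∀ (x v d : ℕ → EuclideanSpace ℝ (Fin n)),
      (∀ k < T, x (k + 1) =
        matVec (A k + B k * K k) (x k) + matVec (B k * K k) (v k) + d k) →
      ∀ k ≤ T,
        ‖x k‖ ≤ Real.sqrt (ρ / η) * Real.sqrt ((1 - 1 / ρ) ^ k) * ‖x 0‖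
          + b * (∑ j ∈ Finset.range k,
              Real.sqrt (ρ / η) * Real.sqrt ((1 - 1 / ρ) ^ (k - 1 - j)) *
                opNorm2 (K j)) * (⨆ j : Fin k, ‖v (j : ℕ)‖)
          + (∑ j ∈ Finset.range k,
              Real.sqrt (ρ / η) * Real.sqrt ((1 - 1 / ρ) ^ (k - 1 - j))) *
              (⨆ j : Fin k, ‖d (j : ℕ)‖) := by
  intro x v d hx k hk
  have hη0 : 0 < η := by linarith
  have hρ0 : 0 < ρ := by linarith
  have hc : 0 < 1 - 1 / ρ := by rw [sub_pos, div_lt_one hρ0]; linarith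
  have hP (j : ℕ) (hj : j ≤ T) : (P j).PosDef := (hPlow j hj).posDef_of_sub_smul_one hη0
  set s : ℕ → ℝ := fun j => quadNorm (P j)⁻¹ (x j)
  have hstep : ∀ j < k, s (j + 1) ≤ √(1 - 1 / ρ) * s j +
      (√η)⁻¹ * (b * opNorm2 (K j) * (⨆ i : Fin k, ‖v i‖) + ⨆ i : Fin k, ‖d i‖) := by
    intro j hj
    have hjT : j < T := by omega
    have hM := posSemidef_smul_sub_closedLoop_of_lmi (hP j hjT.le) (hZ j) (hZ (j + 1))
      (hdata j hjT) (hR j hjT) (heq j hjT) (hK j hjT) (hLMI j hjT).posSemidef (hSNR j hjT)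
      (hγ j hjT) (ha j hjT).1 (ha j hjT).2 hρ0 (hPhigh (j + 1) hjT)
    have hb0 : 0 ≤ b * opNorm2 (K j) :=
      mul_nonneg ((norm_nonneg _).trans (hb j hjT)) (norm_nonneg _)
    calc s (j + 1) ≤ √(1 - 1 / ρ) * s j + (√η)⁻¹ * ‖matVec (B j * K j) (v j) + d j‖ := by
          simpa only [s, hx j hjT, add_assoc] using
            quadNorm_inv_matVec_add_le (hP j hjT.le) hc hη0 (hPlow (j + 1) hjT) hM (x j) _
      _ ≤ _ := by
          grw [norm_matVec_mul_add_le (hb j hjT), le_ciSup_fin (fun i => ‖v i‖) hj,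
            le_ciSup_fin (fun i => ‖d i‖) hj]
  have hs0 : s 0 ≤ (√η)⁻¹ * ‖x 0‖ := quadNorm_inv_le hη0 (hPlow 0 (Nat.zero_le T)) (x 0)
  have hxk : ‖x k‖ ≤ √ρ * s k := norm_le_quadNorm_inv hρ0 (hP k hk) (hPhigh k hk) (x k)
  grw [hxk, le_pow_mul_add_sum_of_le_mul_add (Real.sqrt_nonneg _) hstep, hs0]
  refine le_of_eq ?_
  simp only [Real.sqrt_pow hc.le, Real.sqrt_div' _ hη0.le, Finset.mul_sum, Finset.sum_mul, mul_add]
  rw [add_assoc, ← Finset.sum_add_distrib]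
  congr 1
  · ring
  · exact Finset.sum_congr rfl fun j _ => by ring

/-- Robust trajectory boundedness from noisy data under a
signal-to-noise-ratio bound (Corollary 6 of the paper). -/
theorem robust_bounded_trajectories_SNR
    {n m L T : ℕ}
    (A : ℕ → Matrix (Fin n) (Fin n) ℝ) (B : ℕ → Matrix (Fin n) (Fin m) ℝ)
    (X V Z : ℕ → Matrix (Fin n) (Fin L) ℝ)
    (U : ℕ → Matrix (Fin m) (Fin L) ℝ)
    (D : ℕ → Matrix (Fin n) (Fin L) ℝ)
    (hZ : ∀ k, Z k = X k + V k)
    (hdata : ∀ k < T, X (k + 1) = A k * X k + B k * U k + D k)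
    (hrank : ∀ k < T, (Matrix.fromRows (Z k) (U k)).rank = n + m)
    (R : ℕ → Matrix (Fin n) (Fin L) ℝ)
    (hR : ∀ k < T, R k = A k * V k - V (k + 1) - D k)
    (γ : ℕ → ℝ) (hγ : ∀ k < T, 0 < γ k)
    (hSNR : ∀ k < T,
      ((1 / γ k) • (Z (k + 1) * (Z (k + 1))ᵀ) - R k * (R k)ᵀ).PosSemidef)
    (η ρ : ℝ) (hη : 1 ≤ η) (hρ : η < ρ)
    (Y : ℕ → Matrix (Fin L) (Fin n) ℝ) (P : ℕ → Matrix (Fin n) (Fin n) ℝ)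
    (a : ℕ → ℝ) (ha : ∀ k < T, 0 ≤ a k ∧ a k ≤ γ k)
    (hPsymm : ∀ k ≤ T, (P k).IsSymm)
    (hLMI : ∀ k < T,
      (Matrix.fromBlocks
        (Matrix.fromBlocks (P (k + 1) - 1 - Z (k + 1) * (Z (k + 1))ᵀ)
          (0 : Matrix (Fin n) (Fin L) ℝ)
          (0 : Matrix (Fin L) (Fin n) ℝ)
          (a k • (1 : Matrix (Fin L) (Fin L) ℝ)))
        (Matrix.fromRows (Z (k + 1) * Y k) (Y k))
        (Matrix.fromCols ((Y k)ᵀ * (Z (k + 1))ᵀ) ((Y k)ᵀ))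
        (P k)).PosDef)
    (heq : ∀ k < T, Z k * Y k = P k)
    (hPlow : ∀ k ≤ T, (P k - η • (1 : Matrix (Fin n) (Fin n) ℝ)).PosSemidef)
    (hPhigh : ∀ k ≤ T, (ρ • (1 : Matrix (Fin n) (Fin n) ℝ) - P k).PosSemidef)
    (b : ℝ) (hb : ∀ j < T, opNorm2 (B j) ≤ b)
    (K : ℕ → Matrix (Fin m) (Fin n) ℝ)
    (hK : ∀ k < T, K k = U k * Y k * (P k)⁻¹) :
    ∀ (x v d : ℕ → EuclideanSpace ℝ (Fin n)),
      (∀ k < T, x (k + 1) =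
        matVec (A k + B k * K k) (x k) + matVec (B k * K k) (v k) + d k) →
      ∀ k ≤ T,
        ‖x k‖ ≤ Real.sqrt (ρ / η) * Real.sqrt ((1 - 1 / ρ) ^ k) * ‖x 0‖
          + b * (∑ j ∈ Finset.range k,
              Real.sqrt (ρ / η) * Real.sqrt ((1 - 1 / ρ) ^ (k - 1 - j)) *
                opNorm2 (K j)) * (⨆ j : Fin k, ‖v (j : ℕ)‖)
          + (∑ j ∈ Finset.range k,
              Real.sqrt (ρ / η) * Real.sqrt ((1 - 1 / ρ) ^ (k - 1 - j))) *
              (⨆ j : Fin k, ‖d (j : ℕ)‖) :=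
  robust_bounded_trajectories_SNR_general A B X V Z U D hZ hdata R hR γ hγ hSNR η ρ hη hρ Y P a ha
    hLMI heq hPlow hPhigh b hb K hK
end

section
/- Suppose there exist symmetric matrices P(k) ≻ 0 in ℝ^{n×n}, k = 0,…,N, such that for k = 0,…,N−1 the quadratic matrix inequality T(k)ᵀ Φ(k) T(k) ≻ 0 holds, where T(k) = [[A_cl(k)ᵀ, C_cl(k)ᵀ], [I_n, 0], [E_cl(k)ᵀ, D_cl(k)ᵀ], [0, I_q]] (a (2n+p+q)×(n+q) block matrix) and Φ(k) = blockdiag([[−P(k), 0], [0, P(k+1)]], [[Q̃_p(k), −S̃_p(k)], [−S̃_p(k)ᵀ, R̃_p(k)]]), and in addition I_q − C(N)P(N)C(N)ᵀ ⪰ 0. Then there exists ε > 0 such that every trajectory of x(k+1) = A_cl(k)x(k) + E_cl(k)w̄(k), z(k) = C_cl(k)x(k) + D_cl(k)w̄(k), z_f = C(N)x(N), with x(0) = 0, satisfies for all disturbance sequences w̄(0),…,w̄(N−1): z_fᵀz_f + Σ_{k=0}^{N−1} [w̄(k); z(k)]ᵀ [[Q_p(k), S_p(k)], [S_p(k)ᵀ,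 R_p(k)]] [w̄(k); z(k)] + ε·Σ_{k=0}^{N−1} w̄(k)ᵀw̄(k) ≤ 0. -/
/-!
Dualization followed by a telescoping sum. Write `Φ(k)` for the middle matrix of the QMI; its
inverse is `blockdiag(-P(k)⁻¹, P(k+1)⁻¹, J Π(k) J)` with `J = blockdiag(-I_p, I_q)`. The kernel of
`T(k)ᵀ` consists of the vectors `(-x, x', -w, z)` with `x' = A x + E w` and `z = C x + D w`, i.e.
of the steps of the system, and `Φ(k)⁻¹` is negative definite on it by an inertia count: `Φ(k)`
is positive definite on the range of `T(k)` (dimension `n + q`, by the QMI) and negative definite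
on the first `ℝⁿ` block together with the `ℝᵖ` block (dimension `n + p`, as `P(k) ≻ 0` and
`Q̃(k) ≺ 0`), and these dimensions add up to `2n + p + q`. Compactness of the unit sphere gives the
definiteness a margin, hence for `V(k, x) = xᵀ P(k)⁻¹ x` the dissipation inequality
`[w; z]ᵀ Π(k) [w; z] + ε |w|² ≤ V(k, x) - V(k+1, x')`. Summing from `x(0) = 0` leaves
`-V(N, x(N))`, and `|C(N) x|² ≤ V(N, x)` is the Schur complement form of
`I - C(N) P(N) C(N)ᵀ ⪰ 0`.
-/

open Matrix Module Filter Topology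

theorem Matrix.dotProduct_transpose_mul_mul_mulVec {R ι κ : Type*} [CommSemiring R] [Fintype ι]
    [Fintype κ] (A : Matrix ι ι R) (M : Matrix ι κ R) (y : κ → R) :
    y ⬝ᵥ ((Mᵀ * A * M) *ᵥ y) = (M *ᵥ y) ⬝ᵥ (A *ᵥ (M *ᵥ y)) := by
  rw [← mulVec_mulVec, ← mulVec_mulVec, dotProduct_mulVec, ← mulVec_transpose,
    transpose_transpose]

theorem Matrix.exists_pos_mul_dotProduct_self_le {ι : Type*} [Fintype ι] {M : Matrix ι ι ℝ}
    (hM : ∀ v ≠ 0, 0 < v ⬝ᵥ (M *ᵥ v)) :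
    ∃ ε > 0, ∀ v : ι → ℝ, ε * (v ⬝ᵥ v) ≤ v ⬝ᵥ (M *ᵥ v) := by
  set S : Set (ι → ℝ) := {u | u ⬝ᵥ u = 1}
  have hS : IsCompact S := by
    refine Metric.isCompact_of_isClosed_isBounded
      (isClosed_eq (by fun_prop) continuous_const) ?_
    refine (Metric.isBounded_closedBall (x := 0) (r := 1)).subset fun u hu => ?_
    rw [mem_closedBall_zero_iff, pi_norm_le_iff_of_nonneg zero_le_one]
    intro i
    have : u i * u i ≤ u ⬝ᵥ u :=
      Finset.single_le_sum (f := fun j => u j * u j) (fun j _ => mul_self_nonneg _)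
        (Finset.mem_univ i)
    rw [Real.norm_eq_abs, abs_le_one_iff_mul_self_le_one]
    exact this.trans hu.le
  obtain ⟨ε, hε, hmin⟩ := hS.exists_forall_le' (by fun_prop) fun u (hu : u ⬝ᵥ u = 1) =>
    hM u fun h => by simp [h] at hu
  refine ⟨ε, hε, fun v => ?_⟩
  rcases eq_or_ne v 0 with rfl | hv
  · simp
  have hvv : 0 < v ⬝ᵥ v := by
    simpa [dotProduct_self_star_pos_iff] using (dotProduct_star_self_pos_iff.mpr hv)
  set c := √(v ⬝ᵥ v)
  have hc : c ^ 2 = v ⬝ᵥ v := Real.sq_sqrt hvv.le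
  have hc0 : c ≠ 0 := by positivity
  have hunit : c⁻¹ • v ∈ S := by
    show (c⁻¹ • v) ⬝ᵥ (c⁻¹ • v) = 1
    rw [smul_dotProduct, dotProduct_smul, smul_smul, ← hc, smul_eq_mul]
    field_simp
  have := hmin _ hunit
  rw [mulVec_smul, smul_dotProduct, dotProduct_smul, smul_smul, smul_eq_mul] at this
  calc ε * (v ⬝ᵥ v) ≤ c⁻¹ * c⁻¹ * (v ⬝ᵥ (M *ᵥ v)) * c ^ 2 := by
        rw [← hc]; gcongr
    _ = v ⬝ᵥ (M *ᵥ v) := by field_simp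

theorem Matrix.PosDef.mulVec_dotProduct_mulVec_le_inv {m n : Type*} [Fintype m] [Fintype n]
    [DecidableEq m] [DecidableEq n] {P : Matrix n n ℝ} (hP : P.PosDef) {C : Matrix m n ℝ}
    (h : (1 - C * P * Cᵀ).PosSemidef) (x : n → ℝ) :
    (C *ᵥ x) ⬝ᵥ (C *ᵥ x) ≤ x ⬝ᵥ (P⁻¹ *ᵥ x) := by
  have hPinv := hP.inv
  have := hPinv.isUnit.invertible
  have : Invertible (1 : Matrix m m ℝ) := invertibleOne
  have hblock : (fromBlocks 1 C Cᴴ P⁻¹).PosSemidef := by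
    rwa [PosDef.fromBlocks₂₂ 1 C hPinv, nonsing_inv_nonsing_inv P hP.det_pos.ne'.isUnit]
  have hschur : (P⁻¹ - Cᵀ * C).PosSemidef := by
    simpa using (PosDef.fromBlocks₁₁ C P⁻¹ PosDef.one).mp hblock
  simpa [sub_mulVec, ← mulVec_mulVec, dotProduct_mulVec _ Cᵀ, vecMul_transpose] using
    hschur.dotProduct_mulVec_nonneg x

theorem Matrix.fromBlocks_neg_mul_fromBlocks_neg_eq_one {m n R : Type*} [Fintype m] [Fintype n]
    [DecidableEq m] [DecidableEq n] [Ring R] {A A' : Matrix m m R} {B B' : Matrix m n R}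
    {C C' : Matrix n m R} {D D' : Matrix n n R}
    (h : fromBlocks A B C D * fromBlocks A' B' C' D' = 1) :
    fromBlocks A (-B) (-C) D * fromBlocks A' (-B') (-C') D' = 1 := by
  rw [fromBlocks_multiply, ← fromBlocks_one, fromBlocks_inj] at h
  obtain ⟨h₁₁, h₁₂, h₂₁, h₂₂⟩ := h
  simp only [fromBlocks_multiply, Matrix.neg_mul, Matrix.mul_neg, neg_neg, ← neg_add, h₁₁, h₁₂,
    h₂₁, h₂₂, neg_zero, fromBlocks_one]

section
variable {R M M' N : Type*} [CommRing R] [AddCommGroup M] [AddCommGroup M'] [AddCommGroup N]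
  [PartialOrder N] [Module R M] [Module R M'] [Module R N] {Q : QuadraticMap R M N}
  {f : M' →ₗ[R] M}

theorem QuadraticMap.PosDef.injective_of_comp (h : (Q.comp f).PosDef) : Function.Injective f := by
  rw [← LinearMap.ker_eq_bot, LinearMap.ker_eq_bot']
  intro x hx
  by_contra hx0
  have := h x hx0
  simp [hx] at this

theorem QuadraticMap.PosDef.restrict_range_of_comp (h : (Q.comp f).PosDef) :
    (Q.restrict (LinearMap.range f)).PosDef := by
  rintro ⟨_, x, rfl⟩ hx
  exact h x fun hx0 => hx (by simp [hx0])

end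

theorem QuadraticMap.neg_of_forall_isOrtho {𝕜 V : Type*} [Field 𝕜] [LinearOrder 𝕜]
    [IsStrictOrderedRing 𝕜] [AddCommGroup V] [Module 𝕜 V] [FiniteDimensional 𝕜 V]
    {Q : QuadraticForm 𝕜 V} {W U : Submodule 𝕜 V} (hW : (Q.restrict W).PosDef)
    (hU : ((-Q).restrict U).PosDef) (hdim : finrank 𝕜 V ≤ finrank 𝕜 W + finrank 𝕜 U)
    {x : V} (hx : x ≠ 0) (horth : ∀ t ∈ W, Q.IsOrtho x t) : Q x < 0 := by
  -- Otherwise `Q ≥ 0` on `W ⊔ 𝕜 ∙ x`, which has dimension `dim W + 1` and meets `U` trivially.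
  by_contra! hQx
  have hxW : x ∉ W := fun hmem => by
    have hpos : 0 < Q x := hW ⟨x, hmem⟩ (by simpa using hx)
    have h2 := (horth x hmem).polar_eq_zero
    rw [polar_self, two_smul] at h2
    linarith
  have hnonneg : ∀ v ∈ W ⊔ 𝕜 ∙ x, 0 ≤ Q v := by
    intro v hv
    obtain ⟨t, ht, s, hs, rfl⟩ := Submodule.mem_sup.mp hv
    obtain ⟨c, rfl⟩ := Submodule.mem_span_singleton.mp hs
    have hsplit : Q (t + c • x) = Q t + c * c * Q x := by
      have := polar_smul_left (Q := Q) c x t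
      rw [(horth t ht).polar_eq_zero, smul_zero, polar, add_comm (c • x),
        QuadraticMap.map_smul, smul_eq_mul] at this
      linear_combination this
    have hQt : 0 ≤ Q t := by
      rcases eq_or_ne t 0 with rfl | ht0
      · simp
      · exact (hW ⟨t, ht⟩ (by simpa using ht0)).le
    rw [hsplit]
    have := mul_self_nonneg c
    positivity
  have hdisj : Disjoint (W ⊔ 𝕜 ∙ x) U := by
    rw [Submodule.disjoint_def]
    intro v hv hvU
    by_contra hv0
    have hneg : 0 < -Q v := hU ⟨v, hvU⟩ (by simpa using hv0)
    linarith [hnonneg v hv]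
  have hrank : finrank 𝕜 ↥(W ⊔ 𝕜 ∙ x) = finrank 𝕜 W + 1 := by
    have := Submodule.finrank_sup_add_finrank_inf_eq W (𝕜 ∙ x)
    rw [(Submodule.disjoint_span_singleton_of_notMem hxW).eq_bot, finrank_bot,
      finrank_span_singleton hx] at this
    omega
  have := Submodule.finrank_add_finrank_le_of_disjoint hdisj
  omega

theorem Matrix.dualization {ι κ ν : Type*} [Fintype ι] [DecidableEq ι] [Fintype κ] [Fintype ν]
    {Φ Ψ : Matrix ι ι ℝ} (hΦ : Φ.IsSymm) (hΦΨ : Φ * Ψ = 1) {T : Matrix ι κ ℝ}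
    {N : Matrix ι ν ℝ} (hT : ∀ y ≠ 0, 0 < (T *ᵥ y) ⬝ᵥ (Φ *ᵥ (T *ᵥ y)))
    (hN : ∀ y ≠ 0, (N *ᵥ y) ⬝ᵥ (Φ *ᵥ (N *ᵥ y)) < 0)
    (hcard : Fintype.card ι ≤ Fintype.card κ + Fintype.card ν) {g : ι → ℝ} (hg : g ≠ 0)
    (horth : Tᵀ *ᵥ g = 0) : g ⬝ᵥ (Ψ *ᵥ g) < 0 := by
  set Q := Φ.toQuadraticForm'
  have hQ (v : ι → ℝ) : Q v = v ⬝ᵥ (Φ *ᵥ v) := by simp [Q, toQuadraticForm', toLinearMap₂'_apply']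
  -- `u` is `Q`-orthogonal to the range of `T` because `Φ u = g` is orthogonal to it.
  set u := Ψ *ᵥ g
  have hΦu : Φ *ᵥ u = g := by rw [mulVec_mulVec, hΦΨ, one_mulVec]
  have hu : u ≠ 0 := fun h0 => hg (by rw [← hΦu, h0, mulVec_zero])
  have hTQ : (Q.comp T.mulVecLin).PosDef := fun y hy => by
    simpa [hQ] using hT y hy
  have hNQ : ((-Q).comp N.mulVecLin).PosDef := fun y hy => by
    simpa [hQ] using hN y hy
  calc g ⬝ᵥ (Ψ *ᵥ g) = Q u := by rw [hQ, hΦu, dotProduct_comm]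
    _ < 0 := by
      refine QuadraticMap.neg_of_forall_isOrtho hTQ.restrict_range_of_comp
        hNQ.restrict_range_of_comp ?_ hu ?_
      · rw [LinearMap.finrank_range_of_inj hTQ.injective_of_comp,
          LinearMap.finrank_range_of_inj hNQ.injective_of_comp]
        simpa using hcard
      · rintro _ ⟨y, rfl⟩
        rw [QuadraticMap.isOrtho_def, hQ, hQ, hQ]
        have h1 : u ⬝ᵥ (Φ *ᵥ (T *ᵥ y)) = 0 := by
          rw [dotProduct_mulVec, ← mulVec_transpose, hΦ.eq, hΦu, dotProduct_mulVec,
            ← mulVec_transpose, horth, zero_dotProduct]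
        have h2 : (T *ᵥ y) ⬝ᵥ (Φ *ᵥ u) = 0 := by
          rw [hΦu, dotProduct_comm, dotProduct_mulVec, ← mulVec_transpose, horth, zero_dotProduct]
        simp only [mulVecLin_apply, mulVec_add, dotProduct_add, add_dotProduct, h1, h2]
        ring

section
variable {n p q : Type*} [Fintype n] [Fintype p] [Fintype q]
  [DecidableEq n] [DecidableEq p] [DecidableEq q]
  {A : Matrix n n ℝ} {E : Matrix n p ℝ} {C : Matrix q n ℝ} {D : Matrix q p ℝ}
  {P P₁ : Matrix n n ℝ} {Q Qt : Matrix p p ℝ} {S St : Matrix p q ℝ} {R Rt : Matrix q q ℝ}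

variable (A E C D) in
/-- The matrix `T(k)`. -/
def qmiOuter : Matrix ((n ⊕ n) ⊕ (p ⊕ q)) (n ⊕ q) ℝ :=
  fromRows (fromRows (fromCols Aᵀ Cᵀ) (fromCols 1 0)) (fromRows (fromCols Eᵀ Dᵀ) (fromCols 0 1))

variable (P P₁ Qt St Rt) in
/-- The matrix `Φ(k)`, with `Qt`, `St`, `Rt` the blocks of `Π(k)⁻¹`. -/
def qmiInner : Matrix ((n ⊕ n) ⊕ (p ⊕ q)) ((n ⊕ n) ⊕ (p ⊕ q)) ℝ :=
  fromBlocks (fromBlocks (-P) 0 0 P₁) 0 0 (fromBlocks Qt (-St) (-Stᵀ) Rt)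

variable (P P₁ Q S R) in
noncomputable def qmiInnerInv : Matrix ((n ⊕ n) ⊕ (p ⊕ q)) ((n ⊕ n) ⊕ (p ⊕ q)) ℝ :=
  fromBlocks (fromBlocks (-P⁻¹) 0 0 P₁⁻¹) 0 0 (fromBlocks Q (-S) (-Sᵀ) R)

variable (A E C D) in
def qmiAnnihilator : Matrix ((n ⊕ n) ⊕ (p ⊕ q)) (n ⊕ p) ℝ :=
  fromRows (fromRows (fromCols (-1) 0) (fromCols A E)) (fromRows (fromCols 0 (-1)) (fromCols C D))

omit [Fintype q] [DecidableEq q] in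
theorem qmiAnnihilator_mulVec (x : n → ℝ) (w : p → ℝ) :
    qmiAnnihilator A E C D *ᵥ Sum.elim x w =
      Sum.elim (Sum.elim (-x) (A *ᵥ x + E *ᵥ w)) (Sum.elim (-w) (C *ᵥ x + D *ᵥ w)) := by
  simp [qmiAnnihilator, fromRows_mulVec, fromBlocks_mulVec, neg_mulVec]

theorem qmiOuter_transpose_mul_qmiAnnihilator :
    (qmiOuter A E C D)ᵀ * qmiAnnihilator A E C D = 0 := by
  simp [qmiAnnihilator, qmiOuter, transpose_fromRows, fromCols_mul_fromRows,
    fromBlocks_transpose, fromBlocks_multiply, fromBlocks_add]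

omit [Fintype n] [DecidableEq n] in
theorem qmiInner_isSymm (hQ : Q.IsSymm) (hR : R.IsSymm)
    (hinv : fromBlocks Q S Sᵀ R * fromBlocks Qt St Stᵀ Rt = 1) (hP : P.IsSymm)
    (hP₁ : P₁.IsSymm) : (qmiInner P P₁ Qt St Rt).IsSymm := by
  have hPit : (fromBlocks Qt St Stᵀ Rt).IsSymm := by
    rw [← inv_eq_right_inv hinv]
    exact (IsSymm.fromBlocks hQ rfl hR).inv
  obtain ⟨hQt, -, -, hRt⟩ := isSymm_fromBlocks_iff.mp hPit
  exact .fromBlocks (.fromBlocks hP.neg transpose_zero hP₁) transpose_zero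
    (.fromBlocks hQt (transpose_neg _) hRt)

theorem qmiInner_mul_qmiInnerInv (hinv : fromBlocks Q S Sᵀ R * fromBlocks Qt St Stᵀ Rt = 1)
    (hP : IsUnit P.det) (hP₁ : IsUnit P₁.det) :
    qmiInner P P₁ Qt St Rt * qmiInnerInv P P₁ Q S R = 1 := by
  simp [qmiInner, qmiInnerInv, fromBlocks_multiply, mul_nonsing_inv _ hP, mul_nonsing_inv _ hP₁,
    fromBlocks_neg_mul_fromBlocks_neg_eq_one (mul_eq_one_comm.mp hinv)]

omit [DecidableEq n] [DecidableEq p] [DecidableEq q] in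
theorem dotProduct_qmiInner_mulVec_neg (hP : P.PosDef) (hQt : (-Qt).PosDef) (a : n → ℝ)
    (u : p → ℝ) (hau : Sum.elim a u ≠ 0) :
    Sum.elim (Sum.elim a 0) (Sum.elim u 0) ⬝ᵥ
      (qmiInner P P₁ Qt St Rt *ᵥ Sum.elim (Sum.elim a 0) (Sum.elim u 0)) < 0 := by
  have hval : Sum.elim (Sum.elim a 0) (Sum.elim u 0) ⬝ᵥ
      (qmiInner P P₁ Qt St Rt *ᵥ Sum.elim (Sum.elim a 0) (Sum.elim u 0)) =
      -(a ⬝ᵥ (P *ᵥ a) + u ⬝ᵥ (-Qt *ᵥ u)) := by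
    simp only [qmiInner, fromBlocks_mulVec, Sum.elim_comp_inl, Sum.elim_comp_inr, neg_mulVec,
      mulVec_zero, zero_mulVec, add_zero, zero_add, sumElim_dotProduct_sumElim, dotProduct_neg,
      dotProduct_zero, zero_dotProduct, neg_zero]
    ring
  rw [hval, neg_neg_iff_pos]
  rcases eq_or_ne a 0 with rfl | ha
  · have hu : u ≠ 0 := by rintro rfl; exact hau (by ext (i | i) <;> rfl)
    simpa using hQt.dotProduct_mulVec_pos hu
  · exact add_pos_of_pos_of_nonneg (by simpa using hP.dotProduct_mulVec_pos ha)
      (by simpa using hQt.posSemidef.dotProduct_mulVec_nonneg u)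

omit [DecidableEq p] [DecidableEq q] in
theorem dotProduct_qmiInnerInv_mulVec (x x' : n → ℝ) (w : p → ℝ) (z : q → ℝ) :
    Sum.elim (Sum.elim (-x) x') (Sum.elim (-w) z) ⬝ᵥ
        (qmiInnerInv P P₁ Q S R *ᵥ Sum.elim (Sum.elim (-x) x') (Sum.elim (-w) z)) =
      Sum.elim w z ⬝ᵥ (fromBlocks Q S Sᵀ R *ᵥ Sum.elim w z) + x' ⬝ᵥ (P₁⁻¹ *ᵥ x')
        - x ⬝ᵥ (P⁻¹ *ᵥ x) := by
  simp only [qmiInnerInv, fromBlocks_mulVec, Sum.elim_comp_inl, Sum.elim_comp_inr, neg_mulVec,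
    mulVec_neg, zero_mulVec, add_zero, zero_add, neg_neg, neg_zero, sumElim_dotProduct_sumElim,
    dotProduct_neg, neg_dotProduct, dotProduct_add]
  ring

theorem dotProduct_qmiInnerInv_qmiAnnihilator_neg (hQ : Q.IsSymm) (hR : R.IsSymm)
    (hQt : (-Qt).PosDef) (hinv : fromBlocks Q S Sᵀ R * fromBlocks Qt St Stᵀ Rt = 1)
    (hP : P.PosDef) (hP₁ : P₁.PosDef)
    (hQMI : ((qmiOuter A E C D)ᵀ * qmiInner P P₁ Qt St Rt * qmiOuter A E C D).PosDef)
    {v : n ⊕ p → ℝ} (hv : v ≠ 0) :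
    (qmiAnnihilator A E C D *ᵥ v) ⬝ᵥ
      (qmiInnerInv P P₁ Q S R *ᵥ (qmiAnnihilator A E C D *ᵥ v)) < 0 := by
  set N : Matrix ((n ⊕ n) ⊕ (p ⊕ q)) (n ⊕ p) ℝ := fromBlocks (fromRows 1 0) 0 0 (fromRows 1 0)
  have hN (a : n → ℝ) (u : p → ℝ) :
      N *ᵥ Sum.elim a u = Sum.elim (Sum.elim a 0) (Sum.elim u 0) := by
    simp [N, fromBlocks_mulVec, fromRows_mulVec]
  refine dualization (qmiInner_isSymm hQ hR hinv (isHermitian_iff_isSymm.mp hP.isHermitian)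
      (isHermitian_iff_isSymm.mp hP₁.isHermitian))
    (qmiInner_mul_qmiInnerInv hinv hP.det_pos.ne'.isUnit hP₁.det_pos.ne'.isUnit)
    (fun y hy => by
      simpa [dotProduct_transpose_mul_mul_mulVec] using hQMI.dotProduct_mulVec_pos hy)
    (N := N) (fun y hy => ?_) (by simp only [Fintype.card_sum]; omega) (fun h0 => hv ?_)
    (by rw [mulVec_mulVec, qmiOuter_transpose_mul_qmiAnnihilator, zero_mulVec])
  · obtain ⟨a, u, rfl⟩ : ∃ a u, y = Sum.elim a u := ⟨_, _, (Sum.elim_comp_inl_inr y).symm⟩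
    rw [hN]
    exact dotProduct_qmiInner_mulVec_neg hP hQt a u hy
  · obtain ⟨x, w, rfl⟩ : ∃ x w, v = Sum.elim x w := ⟨_, _, (Sum.elim_comp_inl_inr v).symm⟩
    rw [qmiAnnihilator_mulVec] at h0
    ext (i | i)
    · simpa using congrFun h0 (.inl (.inl i))
    · simpa using congrFun h0 (.inr (.inl i))

theorem dissipation_inequality_of_qmi (hQ : Q.IsSymm) (hR : R.IsSymm) (hQt : (-Qt).PosDef)
    (hinv : fromBlocks Q S Sᵀ R * fromBlocks Qt St Stᵀ Rt = 1) (hP : P.PosDef)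
    (hP₁ : P₁.PosDef)
    (hQMI : ((qmiOuter A E C D)ᵀ * qmiInner P P₁ Qt St Rt * qmiOuter A E C D).PosDef) :
    ∀ᶠ ε in 𝓝[>] (0 : ℝ), ∀ (x : n → ℝ) (w : p → ℝ),
      Sum.elim w (C *ᵥ x + D *ᵥ w) ⬝ᵥ (fromBlocks Q S Sᵀ R *ᵥ Sum.elim w (C *ᵥ x + D *ᵥ w))
          + ε * (w ⬝ᵥ w)
        ≤ x ⬝ᵥ (P⁻¹ *ᵥ x) - (A *ᵥ x + E *ᵥ w) ⬝ᵥ (P₁⁻¹ *ᵥ (A *ᵥ x + E *ᵥ w)) := by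
  set G := qmiAnnihilator A E C D
  obtain ⟨ε₀, hε₀, hmargin⟩ :=
    exists_pos_mul_dotProduct_self_le (M := Gᵀ * -qmiInnerInv P P₁ Q S R * G) fun v hv => by
      rw [dotProduct_transpose_mul_mul_mulVec, neg_mulVec, dotProduct_neg, neg_pos]
      exact dotProduct_qmiInnerInv_qmiAnnihilator_neg hQ hR hQt hinv hP hP₁ hQMI hv
  filter_upwards [Ioo_mem_nhdsGT hε₀] with ε ⟨hε, hεε₀⟩ x w
  have hm := hmargin (Sum.elim x w)
  rw [dotProduct_transpose_mul_mul_mulVec, neg_mulVec, dotProduct_neg, qmiAnnihilator_mulVec,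
    dotProduct_qmiInnerInv_mulVec, sumElim_dotProduct_sumElim] at hm
  have hx : 0 ≤ x ⬝ᵥ x := by simpa using dotProduct_star_self_nonneg x
  have hw : 0 ≤ w ⬝ᵥ w := by simpa using dotProduct_star_self_nonneg w
  nlinarith

end

theorem finite_horizon_robust_performance_general
    {n p q N : ℕ}
    (Acl : ℕ → Matrix (Fin n) (Fin n) ℝ) (Ecl : ℕ → Matrix (Fin n) (Fin p) ℝ)
    (Ccl : ℕ → Matrix (Fin q) (Fin n) ℝ) (Dcl : ℕ → Matrix (Fin q) (Fin p) ℝ)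
    (CN : Matrix (Fin q) (Fin n) ℝ)
    (Qp : ℕ → Matrix (Fin p) (Fin p) ℝ) (Sp : ℕ → Matrix (Fin p) (Fin q) ℝ)
    (Rp : ℕ → Matrix (Fin q) (Fin q) ℝ)
    (Qpt : ℕ → Matrix (Fin p) (Fin p) ℝ) (Spt : ℕ → Matrix (Fin p) (Fin q) ℝ)
    (Rpt : ℕ → Matrix (Fin q) (Fin q) ℝ)
    (hQpSymm : ∀ k, (Qp k).IsSymm) (hRpSymm : ∀ k, (Rp k).IsSymm)
    (hQptND : ∀ k, (-(Qpt k)).PosDef)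
    -- the tilded matrices form the inverse of the performance index:
    (hinv : ∀ k,
      Matrix.fromBlocks (Qp k) (Sp k) ((Sp k)ᵀ) (Rp k) *
        Matrix.fromBlocks (Qpt k) (Spt k) ((Spt k)ᵀ) (Rpt k) = 1)
    (P : ℕ → Matrix (Fin n) (Fin n) ℝ)
    (hP : ∀ k ≤ N, (P k).PosDef)
    -- the quadratic matrix inequality T(k)ᵀ Φ(k) T(k) ≻ 0:
    (hQMI : ∀ k < N,
      ((Matrix.fromRows
          (Matrix.fromRows
            (Matrix.fromCols ((Acl k)ᵀ) ((Ccl k)ᵀ))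
            (Matrix.fromCols (1 : Matrix (Fin n) (Fin n) ℝ)
              (0 : Matrix (Fin n) (Fin q) ℝ)))
          (Matrix.fromRows
            (Matrix.fromCols ((Ecl k)ᵀ) ((Dcl k)ᵀ))
            (Matrix.fromCols (0 : Matrix (Fin q) (Fin n) ℝ)
              (1 : Matrix (Fin q) (Fin q) ℝ))))ᵀ *
        Matrix.fromBlocks
          (Matrix.fromBlocks (-(P k)) 0 0 (P (k + 1))) 0 0
          (Matrix.fromBlocks (Qpt k) (-(Spt k)) (-((Spt k)ᵀ)) (Rpt k)) *
        (Matrix.fromRows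
          (Matrix.fromRows
            (Matrix.fromCols ((Acl k)ᵀ) ((Ccl k)ᵀ))
            (Matrix.fromCols (1 : Matrix (Fin n) (Fin n) ℝ)
              (0 : Matrix (Fin n) (Fin q) ℝ)))
          (Matrix.fromRows
            (Matrix.fromCols ((Ecl k)ᵀ) ((Dcl k)ᵀ))
            (Matrix.fromCols (0 : Matrix (Fin q) (Fin n) ℝ)
              (1 : Matrix (Fin q) (Fin q) ℝ))))).PosDef)
    -- the final-time condition I_q − C(N) P(N) C(N)ᵀ ⪰ 0:
    (hfinal : ((1 : Matrix (Fin q) (Fin q) ℝ) - CN * P N * CNᵀ).PosSemidef) :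
    ∃ ε : ℝ, 0 < ε ∧
      ∀ (w : ℕ → Fin p → ℝ) (x : ℕ → Fin n → ℝ) (z : ℕ → Fin q → ℝ),
        x 0 = 0 →
        (∀ k < N, x (k + 1) = (Acl k).mulVec (x k) + (Ecl k).mulVec (w k)) →
        (∀ k < N, z k = (Ccl k).mulVec (x k) + (Dcl k).mulVec (w k)) →
        (CN.mulVec (x N)) ⬝ᵥ (CN.mulVec (x N))
          + (∑ k ∈ Finset.range N,
              (Sum.elim (w k) (z k)) ⬝ᵥ
                ((Matrix.fromBlocks (Qp k) (Sp k) ((Sp k)ᵀ) (Rp k)).mulVec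
                  (Sum.elim (w k) (z k))))
          + ε * ∑ k ∈ Finset.range N, (w k) ⬝ᵥ (w k) ≤ 0 := by
  have hstep := fun k (hk : k ∈ Set.Iio N) => dissipation_inequality_of_qmi (hQpSymm k)
    (hRpSymm k) (hQptND k) (hinv k) (hP k hk.le) (hP (k + 1) hk) (hQMI k hk)
  obtain ⟨ε, hε, hstepε⟩ :=
    (eventually_mem_nhdsWithin.and ((eventually_all_finite (Set.finite_Iio N)).2 hstep)).exists
  refine ⟨ε, hε, fun w x z hx0 hx hz => ?_⟩
  have htele : ∑ k ∈ Finset.range N, (Sum.elim (w k) (z k) ⬝ᵥ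
        (fromBlocks (Qp k) (Sp k) (Sp k)ᵀ (Rp k) *ᵥ Sum.elim (w k) (z k)) + ε * (w k ⬝ᵥ w k))
      ≤ x 0 ⬝ᵥ ((P 0)⁻¹ *ᵥ x 0) - x N ⬝ᵥ ((P N)⁻¹ *ᵥ x N) := by
    refine (Finset.sum_le_sum fun k hk => ?_).trans_eq
      (Finset.sum_range_sub' (fun k => x k ⬝ᵥ ((P k)⁻¹ *ᵥ x k)) N)
    rw [Finset.mem_range] at hk
    simpa only [← hx k hk, ← hz k hk] using hstepε k hk (x k) (w k)
  have hterm := (hP N le_rfl).mulVec_dotProduct_mulVec_le_inv hfinal (x N)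
  rw [Finset.sum_add_distrib, ← Finset.mul_sum, hx0] at htele
  simp only [mulVec_zero, dotProduct_zero, zero_sub] at htele
  linarith

/-- Finite-horizon robust quadratic performance via a quadratic
matrix inequality (Lemma 3 of the paper). `Qpt`, `Spt`, `Rpt` are the blocks of
the inverse of the performance index `Π(k) = [[Qp(k), Sp(k)], [Sp(k)ᵀ, Rp(k)]]`. -/
theorem finite_horizon_robust_performance
    {n p q N : ℕ}
    (Acl : ℕ → Matrix (Fin n) (Fin n) ℝ) (Ecl : ℕ → Matrix (Fin n) (Fin p) ℝ)
    (Ccl : ℕ → Matrix (Fin q) (Fin n) ℝ) (Dcl : ℕ → Matrix (Fin q) (Fin p) ℝ)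
    (CN : Matrix (Fin q) (Fin n) ℝ)
    (Qp : ℕ → Matrix (Fin p) (Fin p) ℝ) (Sp : ℕ → Matrix (Fin p) (Fin q) ℝ)
    (Rp : ℕ → Matrix (Fin q) (Fin q) ℝ)
    (Qpt : ℕ → Matrix (Fin p) (Fin p) ℝ) (Spt : ℕ → Matrix (Fin p) (Fin q) ℝ)
    (Rpt : ℕ → Matrix (Fin q) (Fin q) ℝ)
    (hQpSymm : ∀ k, (Qp k).IsSymm) (hRpSymm : ∀ k, (Rp k).IsSymm)
    (hRpPSD : ∀ k, (Rp k).PosSemidef)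
    (hQptND : ∀ k, (-(Qpt k)).PosDef)
    -- the tilded matrices form the inverse of the performance index:
    (hinv : ∀ k,
      Matrix.fromBlocks (Qp k) (Sp k) ((Sp k)ᵀ) (Rp k) *
        Matrix.fromBlocks (Qpt k) (Spt k) ((Spt k)ᵀ) (Rpt k) = 1)
    (P : ℕ → Matrix (Fin n) (Fin n) ℝ)
    (hP : ∀ k ≤ N, (P k).PosDef)
    -- the quadratic matrix inequality T(k)ᵀ Φ(k) T(k) ≻ 0:
    (hQMI : ∀ k < N,
      ((Matrix.fromRows
          (Matrix.fromRows
            (Matrix.fromCols ((Acl k)ᵀ) ((Ccl k)ᵀ))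
            (Matrix.fromCols (1 : Matrix (Fin n) (Fin n) ℝ)
              (0 : Matrix (Fin n) (Fin q) ℝ)))
          (Matrix.fromRows
            (Matrix.fromCols ((Ecl k)ᵀ) ((Dcl k)ᵀ))
            (Matrix.fromCols (0 : Matrix (Fin q) (Fin n) ℝ)
              (1 : Matrix (Fin q) (Fin q) ℝ))))ᵀ *
        Matrix.fromBlocks
          (Matrix.fromBlocks (-(P k)) 0 0 (P (k + 1))) 0 0
          (Matrix.fromBlocks (Qpt k) (-(Spt k)) (-((Spt k)ᵀ)) (Rpt k)) *
        (Matrix.fromRows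
          (Matrix.fromRows
            (Matrix.fromCols ((Acl k)ᵀ) ((Ccl k)ᵀ))
            (Matrix.fromCols (1 : Matrix (Fin n) (Fin n) ℝ)
              (0 : Matrix (Fin n) (Fin q) ℝ)))
          (Matrix.fromRows
            (Matrix.fromCols ((Ecl k)ᵀ) ((Dcl k)ᵀ))
            (Matrix.fromCols (0 : Matrix (Fin q) (Fin n) ℝ)
              (1 : Matrix (Fin q) (Fin q) ℝ))))).PosDef)
    -- the final-time condition I_q − C(N) P(N) C(N)ᵀ ⪰ 0:
    (hfinal : ((1 : Matrix (Fin q) (Fin q) ℝ) - CN * P N * CNᵀ).PosSemidef) :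
    ∃ ε : ℝ, 0 < ε ∧
      ∀ (w : ℕ → Fin p → ℝ) (x : ℕ → Fin n → ℝ) (z : ℕ → Fin q → ℝ),
        x 0 = 0 →
        (∀ k < N, x (k + 1) = (Acl k).mulVec (x k) + (Ecl k).mulVec (w k)) →
        (∀ k < N, z k = (Ccl k).mulVec (x k) + (Dcl k).mulVec (w k)) →
        (CN.mulVec (x N)) ⬝ᵥ (CN.mulVec (x N))
          + (∑ k ∈ Finset.range N,
              (Sum.elim (w k) (z k)) ⬝ᵥ
                ((Matrix.fromBlocks (Qp k) (Sp k) ((Sp k)ᵀ) (Rp k)).mulVec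
                  (Sum.elim (w k) (z k))))
          + ε * ∑ k ∈ Finset.range N, (w k) ⬝ᵥ (w k) ≤ 0 :=
  finite_horizon_robust_performance_general Acl Ecl Ccl Dcl CN Qp Sp Rp Qpt Spt Rpt hQpSymm hRpSymm
    hQptND hinv P hP hQMI hfinal
end

section
/- Suppose rank[Z(k); U(k)] = n+m for k = 0,…,N−1 and let R(k) = A(k)V(k) − V(k+1) − D(k). Then for each k = 0,…,N−1 there exists M(k) ∈ ℝ^{L×m} with Z(k)M(k) = 0 and U(k)M(k) = I_m, and for every such M(k) the input matrix satisfies B(k) = (Z(k+1) + R(k))M(k). -/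
open Matrix

/-- Data-driven representation of the input matrix `B(k)` from
noisy data (equations (71)-(72) of the paper). -/
theorem noisy_data_driven_input_matrix_representation
    {n m L N : ℕ}
    (A : ℕ → Matrix (Fin n) (Fin n) ℝ) (B : ℕ → Matrix (Fin n) (Fin m) ℝ)
    (X V Z : ℕ → Matrix (Fin n) (Fin L) ℝ)
    (U : ℕ → Matrix (Fin m) (Fin L) ℝ)
    (D : ℕ → Matrix (Fin n) (Fin L) ℝ)
    (hZ : ∀ k, Z k = X k + V k)
    (hdata : ∀ k < N, X (k + 1) = A k * X k + B k * U k + D k)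
    (hrank : ∀ k < N, (Matrix.fromRows (Z k) (U k)).rank = n + m)
    (R : ℕ → Matrix (Fin n) (Fin L) ℝ)
    (hR : ∀ k < N, R k = A k * V k - V (k + 1) - D k) :
    ∀ k < N,
      (∃ M : Matrix (Fin L) (Fin m) ℝ,
        Z k * M = (0 : Matrix (Fin n) (Fin m) ℝ) ∧
        U k * M = (1 : Matrix (Fin m) (Fin m) ℝ)) ∧
      ∀ M : Matrix (Fin L) (Fin m) ℝ,
        Z k * M = (0 : Matrix (Fin n) (Fin m) ℝ) →
        U k * M = (1 : Matrix (Fin m) (Fin m) ℝ) →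
        B k = (Z (k + 1) + R k) * M := by
  intro k hk
  constructor
  · -- surjectivity from full rank
    set W := Matrix.fromRows (Z k) (U k) with hW
    have hsurj : Function.Surjective W.mulVecLin := by
      rw [← LinearMap.range_eq_top]
      apply Submodule.eq_top_of_finrank_eq
      have := hrank k hk
      rw [Matrix.rank] at this
      rw [this]
      simp [Module.finrank_pi]
    -- target: column j of fromRows 0 1
    have hchoice : ∀ j : Fin m, ∃ v : Fin L → ℝ,
        W.mulVec v = fun i => (Matrix.fromRows (0 : Matrix (Fin n) (Fin m) ℝ)
          (1 : Matrix (Fin m) (Fin m) ℝ)) i j := fun j => hsurj _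
    choose Mv hMv using hchoice
    refine ⟨Matrix.of fun i j => Mv j i, ?_, ?_⟩
    · ext i j
      have := congrFun (hMv j) (Sum.inl i)
      simpa [Matrix.mulVec, Matrix.mul_apply, dotProduct, hW,
        Matrix.fromRows_apply_inl, Matrix.fromRows_apply_inr, Matrix.one_apply, mul_comm] using this
    · ext i j
      have := congrFun (hMv j) (Sum.inr i)
      simpa [Matrix.mulVec, Matrix.mul_apply, dotProduct, hW,
        Matrix.fromRows_apply_inl, Matrix.fromRows_apply_inr, Matrix.one_apply, mul_comm] using this
  · intro M hZM hUM
    have key : Z (k + 1) + R k = A k * Z k + B k * U k := by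
      rw [hZ (k+1), hR k hk, hdata k hk, hZ k]
      rw [Matrix.mul_add]; noncomm_ring
    rw [key, Matrix.add_mul, Matrix.mul_assoc, Matrix.mul_assoc, hZM, hUM,
      Matrix.mul_zero, Matrix.mul_one, zero_add]
end

section
/- Suppose A_cl(k), E_cl(k), C_cl(k), D_cl(k) and the performance index Π(k) are all φ-periodic in k, and suppose there exist φ-periodic symmetric matrices P(k) ≻ 0 satisfying, for all k ≥ 0, the quadratic matrix inequality T(k)ᵀ Φ(k) T(k) ≻ 0, where T(k) = [[A_cl(k)ᵀ, C_cl(k)ᵀ], [I_n, 0], [E_cl(k)ᵀ, D_cl(k)ᵀ], [0, I_q]] and Φ(k) = blockdiag([[−P(k), 0], [0, P(k+1)]], [[Q̃_p(k), −S̃_p(k)], [−S̃_p(k)ᵀ, R̃_p(k)]]). Then there exists ε > 0 such that for every square-summable disturbance sequence w̄ ∈ ℓ₂ the trajectory of x(k+1) = A_cl(k)x(k) + E_cl(k)w̄(k), z(k) = C_cl(k)x(k) + D_cl(k)w̄(k) with x(0) = 0 satisfies the infinite-horizon robust performance criterion Σ_{k=0}^{∞} [w̄(k); z(k)]ᵀ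 [[Q_p(k), S_p(k)], [S_p(k)ᵀ, R_p(k)]] [w̄(k); z(k)] + ε·Σ_{k=0}^{∞} w̄(k)ᵀw̄(k) ≤ 0. -/
open Matrix


private lemma real_conjT {a b : Type*} (M : Matrix a b ℝ) : Mᴴ = Mᵀ :=
  Matrix.ext fun _ _ => star_trivial _

private lemma star_pi_real {μ : Type*} (v : μ → ℝ) : star v = v :=
  funext fun _ => star_trivial _

private lemma dot_self_nonneg {μ : Type*} [Fintype μ] (v : μ → ℝ) : 0 ≤ v ⬝ᵥ v :=
  Finset.sum_nonneg fun i _ => mul_self_nonneg (v i)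

private lemma per_mod {α : Type*} (φ : ℕ) (hφ : 0 < φ) (f : ℕ → α)
    (hf : ∀ k, f (k + φ) = f k) : ∀ k, f k = f (k % φ) := by
  intro k
  induction k using Nat.strong_induction_on with
  | _ k ih =>
    rcases lt_or_ge k φ with h | h
    · rw [Nat.mod_eq_of_lt h]
    · have hk : k - φ + φ = k := Nat.sub_add_cancel h
      have h1 : f k = f (k - φ) := by rw [← hf (k - φ), hk]
      have h2 : k % φ = (k - φ) % φ := by
        conv_lhs => rw [← hk]
        rw [Nat.add_mod_right]
      rw [h1, h2]
      exact ih (k - φ) (by omega)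

private lemma quad_abs_bound {μ : Type*} [Fintype μ] (M : Matrix μ μ ℝ) :
    ∃ c : ℝ, 0 < c ∧ ∀ v : μ → ℝ, |v ⬝ᵥ M *ᵥ v| ≤ c * (v ⬝ᵥ v) := by
  refine ⟨(∑ i, ∑ j, |M i j|) + 1, by positivity, fun v => ?_⟩
  have hvv : 0 ≤ v ⬝ᵥ v := dot_self_nonneg v
  have hsq : ∀ i, v i * v i ≤ v ⬝ᵥ v := by
    intro i
    have := Finset.single_le_sum (f := fun j => v j * v j)
      (fun j _ => mul_self_nonneg (v j)) (Finset.mem_univ i)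
    simpa [dotProduct] using this
  have hij : ∀ i j, |v i * v j| ≤ v ⬝ᵥ v := by
    intro i j
    have hi := hsq i; have hj := hsq j
    have h1 : |v i * v j| = |v i| * |v j| := abs_mul _ _
    nlinarith [abs_nonneg (v i), abs_nonneg (v j), sq_nonneg (|v i| - |v j|),
      sq_abs (v i), sq_abs (v j)]
  have h1 : v ⬝ᵥ M *ᵥ v = ∑ i, ∑ j, v i * (M i j * v j) := by
    simp [dotProduct, mulVec, Finset.mul_sum]
  calc |v ⬝ᵥ M *ᵥ v| = |∑ i, ∑ j, v i * (M i j * v j)| := by rw [h1]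
    _ ≤ ∑ i, |∑ j, v i * (M i j * v j)| := Finset.abs_sum_le_sum_abs _ _
    _ ≤ ∑ i, ∑ j, |v i * (M i j * v j)| :=
        Finset.sum_le_sum fun i _ => Finset.abs_sum_le_sum_abs _ _
    _ ≤ ∑ i, ∑ j, |M i j| * (v ⬝ᵥ v) := by
        refine Finset.sum_le_sum fun i _ => Finset.sum_le_sum fun j _ => ?_
        have : |v i * (M i j * v j)| = |M i j| * |v i * v j| := by
          rw [abs_mul, abs_mul, abs_mul]; ring
        rw [this]
        exact mul_le_mul_of_nonneg_left (hij i j) (abs_nonneg _)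
    _ = (∑ i, ∑ j, |M i j|) * (v ⬝ᵥ v) := by
        simp [Finset.sum_mul]
    _ ≤ ((∑ i, ∑ j, |M i j|) + 1) * (v ⬝ᵥ v) := by nlinarith

private lemma psd_cs {μ : Type*} [Fintype μ] {W : Matrix μ μ ℝ} (hW : W.PosSemidef)
    (a b : μ → ℝ) : (a ⬝ᵥ W *ᵥ b) ^ 2 ≤ (a ⬝ᵥ W *ᵥ a) * (b ⬝ᵥ W *ᵥ b) := by
  have hsym : ∀ c d : μ → ℝ, c ⬝ᵥ W *ᵥ d = d ⬝ᵥ W *ᵥ c := by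
    intro c d
    have hWt : Wᵀ = W := by rw [← real_conjT]; exact hW.1
    rw [dotProduct_mulVec c W d, ← mulVec_transpose, hWt]
    exact dotProduct_comm _ _
  have key : ∀ t : ℝ, 0 ≤ (b ⬝ᵥ W *ᵥ b) * (t * t) + (2 * (a ⬝ᵥ W *ᵥ b)) * t
      + (a ⬝ᵥ W *ᵥ a) := by
    intro t
    have h0 := hW.dotProduct_mulVec_nonneg (a + t • b)
    rw [star_pi_real] at h0
    have hexp : (a + t • b) ⬝ᵥ W *ᵥ (a + t • b)
        = (a ⬝ᵥ W *ᵥ a) + 2 * (a ⬝ᵥ W *ᵥ b) * t + (b ⬝ᵥ W *ᵥ b) * (t * t) := by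
      simp only [mulVec_add, mulVec_smul, dotProduct_add, add_dotProduct,
        dotProduct_smul, smul_dotProduct, smul_eq_mul, hsym b a]
      ring
    rw [hexp] at h0
    linarith
  have hd := discrim_le_zero key
  rw [discrim] at hd
  nlinarith [hd]

private lemma posdef_margin {μ : Type*} [Fintype μ] [DecidableEq μ] {N : Matrix μ μ ℝ}
    (hN : N.PosDef) :
    ∃ ε : ℝ, 0 < ε ∧ ∀ v : μ → ℝ, ε * (v ⬝ᵥ v) ≤ v ⬝ᵥ N *ᵥ v := by
  obtain ⟨c, hc, hcb⟩ := quad_abs_bound N⁻¹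
  have hNi : (N⁻¹).PosSemidef := hN.inv.posSemidef
  have hNinv : N⁻¹ * N = 1 :=
    Matrix.nonsing_inv_mul N (isUnit_iff_ne_zero.mpr hN.det_pos.ne')
  refine ⟨c⁻¹, by positivity, fun v => ?_⟩
  rcases eq_or_ne v 0 with rfl | hv
  · simp
  · have hNv : N⁻¹ *ᵥ (N *ᵥ v) = v := by
      rw [mulVec_mulVec, hNinv, one_mulVec]
    have hcs := psd_cs hNi v (N *ᵥ v)
    rw [hNv] at hcs
    have hcomm : (N *ᵥ v) ⬝ᵥ v = v ⬝ᵥ N *ᵥ v := dotProduct_comm _ _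
    rw [hcomm] at hcs
    have hq : 0 ≤ v ⬝ᵥ N *ᵥ v := by
      have := hN.posSemidef.dotProduct_mulVec_nonneg v; rwa [star_pi_real] at this
    have hvNiv : v ⬝ᵥ N⁻¹ *ᵥ v ≤ c * (v ⬝ᵥ v) := le_trans (le_abs_self _) (hcb v)
    have hvv : 0 < v ⬝ᵥ v := by
      rcases (dot_self_nonneg v).lt_or_eq with h | h
      · exact h
      · exact absurd (dotProduct_self_eq_zero.mp h.symm) hv
    have h2 : (v ⬝ᵥ v) ^ 2 ≤ c * (v ⬝ᵥ v) * (v ⬝ᵥ N *ᵥ v) := by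
      nlinarith [hcs, hvNiv, hq, dot_self_nonneg (N⁻¹ *ᵥ v)]
    rw [inv_mul_le_iff₀ hc]
    nlinarith [h2, hvv, mul_pos hvv hvv]

private lemma young_lower {μ : Type*} [Fintype μ] (θ : ℝ) (hθ : 0 < θ) (a b : μ → ℝ) :
    -(θ⁻¹ * (a ⬝ᵥ a)) - θ * (b ⬝ᵥ b) ≤ 2 * (a ⬝ᵥ b) := by
  have h0 : 0 ≤ (θ⁻¹ • a + b) ⬝ᵥ (θ⁻¹ • a + b) := dot_self_nonneg _
  have hexp : (θ⁻¹ • a + b) ⬝ᵥ (θ⁻¹ • a + b)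
      = θ⁻¹ * θ⁻¹ * (a ⬝ᵥ a) + 2 * θ⁻¹ * (a ⬝ᵥ b) + b ⬝ᵥ b := by
    simp only [add_dotProduct, dotProduct_add, smul_dotProduct, dotProduct_smul,
      smul_eq_mul, dotProduct_comm b a]
    ring
  rw [hexp] at h0
  have hθi : 0 < θ⁻¹ := by positivity
  have hm := mul_nonneg hθ.le h0
  have e : θ * (θ⁻¹ * θ⁻¹ * (a ⬝ᵥ a) + 2 * θ⁻¹ * (a ⬝ᵥ b) + b ⬝ᵥ b)
      = θ⁻¹ * (a ⬝ᵥ a) + 2 * (a ⬝ᵥ b) + θ * (b ⬝ᵥ b) := by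
    field_simp
  rw [e] at hm
  linarith

private lemma young_abs {μ : Type*} [Fintype μ] (a b : μ → ℝ) :
    2 * |a ⬝ᵥ b| ≤ a ⬝ᵥ a + b ⬝ᵥ b := by
  have h1 : 0 ≤ (a + b) ⬝ᵥ (a + b) := dot_self_nonneg _
  have h2 : 0 ≤ (a - b) ⬝ᵥ (a - b) := dot_self_nonneg _
  have e1 : (a + b) ⬝ᵥ (a + b) = a ⬝ᵥ a + 2 * (a ⬝ᵥ b) + b ⬝ᵥ b := by
    simp only [add_dotProduct, dotProduct_add, dotProduct_comm b a]; ring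
  have e2 : (a - b) ⬝ᵥ (a - b) = a ⬝ᵥ a - 2 * (a ⬝ᵥ b) + b ⬝ᵥ b := by
    simp only [sub_dotProduct, dotProduct_sub, dotProduct_comm b a]; ring
  rw [e1] at h1; rw [e2] at h2
  rcases abs_cases (a ⬝ᵥ b) with ⟨h, _⟩ | ⟨h, _⟩ <;> rw [h] <;> linarith

private lemma surj_of_inj {m r s : Type*} [Fintype m] [Fintype r] [Fintype s]
    [DecidableEq r] [DecidableEq s]
    (T : Matrix m r ℝ) (V : Matrix m s ℝ)
    (hcard : Fintype.card r + Fintype.card s = Fintype.card m)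
    (hinj : ∀ (a : r → ℝ) (b : s → ℝ), T *ᵥ a + V *ᵥ b = 0 → a = 0 ∧ b = 0) :
    ∀ y : m → ℝ, ∃ (a : r → ℝ) (b : s → ℝ), T *ᵥ a + V *ᵥ b = y := by
  classical
  let L : ((r ⊕ s) → ℝ) →ₗ[ℝ] (m → ℝ) := (Matrix.fromCols T V).mulVecLin
  have hL : ∀ c : (r ⊕ s) → ℝ, L c = T *ᵥ (c ∘ Sum.inl) + V *ᵥ (c ∘ Sum.inr) := by
    intro c
    have : c = Sum.elim (c ∘ Sum.inl) (c ∘ Sum.inr) := (Sum.elim_comp_inl_inr c).symm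
    show (Matrix.fromCols T V) *ᵥ c = _
    conv_lhs => rw [this]
    rw [fromCols_mulVec_sumElim]
  have hker : ∀ c, L c = 0 → c = 0 := by
    intro c hc
    rw [hL] at hc
    obtain ⟨h1, h2⟩ := hinj _ _ hc
    funext i
    cases i with
    | inl i => exact congrFun h1 i
    | inr i => exact congrFun h2 i
  have hLinj : Function.Injective L :=
    LinearMap.ker_eq_bot.mp (LinearMap.ker_eq_bot'.mpr hker)
  have hfr : Module.finrank ℝ ((r ⊕ s) → ℝ) = Module.finrank ℝ (m → ℝ) := by
    rw [Module.finrank_fintype_fun_eq_card, Module.finrank_fintype_fun_eq_card,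
      Fintype.card_sum, hcard]
  have hLsurj : Function.Surjective L :=
    (LinearMap.injective_iff_surjective_of_finrank_eq_finrank hfr).mp hLinj
  intro y
  obtain ⟨c, hc⟩ := hLsurj y
  exact ⟨c ∘ Sum.inl, c ∘ Sum.inr, by rw [← hL, hc]⟩

private lemma dual_key {m r s : Type*} [Fintype m] [Fintype r] [Fintype s]
    [DecidableEq m]
    (W Wi : Matrix m m ℝ) (hWs : Wᵀ = W) (hWWi : W * Wi = 1)
    (T : Matrix m r ℝ) (V : Matrix m s ℝ)
    (hT : ∀ a : r → ℝ, a ≠ 0 → 0 < (T *ᵥ a) ⬝ᵥ W *ᵥ (T *ᵥ a))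
    (hV : ∀ b : s → ℝ, b ≠ 0 → (V *ᵥ b) ⬝ᵥ W *ᵥ (V *ᵥ b) < 0)
    (hsurj : ∀ y : m → ℝ, ∃ (a : r → ℝ) (b : s → ℝ), T *ᵥ a + V *ᵥ b = y)
    (y : m → ℝ) (hy : ∀ a : r → ℝ, (T *ᵥ a) ⬝ᵥ y = 0) (hy0 : y ≠ 0) :
    y ⬝ᵥ Wi *ᵥ y < 0 := by
  obtain ⟨a, b, hab⟩ := hsurj (Wi *ᵥ y)
  set u := T *ᵥ a with hu
  set v := V *ᵥ b with hv
  have hWmove : ∀ c d : m → ℝ, (W *ᵥ c) ⬝ᵥ d = c ⬝ᵥ (W *ᵥ d) := by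
    intro c d
    rw [dotProduct_comm, dotProduct_mulVec, ← mulVec_transpose, hWs]
    exact dotProduct_comm _ _
  have hyW : y = W *ᵥ (u + v) := by
    rw [hab, mulVec_mulVec, hWWi, one_mulVec]
  have h1 : y ⬝ᵥ Wi *ᵥ y = y ⬝ᵥ u + y ⬝ᵥ v := by
    rw [← hab, dotProduct_add]
  have hyu : y ⬝ᵥ u = 0 := by rw [dotProduct_comm, hu]; exact hy a
  have h2 : y ⬝ᵥ v = u ⬝ᵥ (W *ᵥ v) + v ⬝ᵥ (W *ᵥ v) := by
    rw [hyW, hWmove, add_dotProduct]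
  have h3 : u ⬝ᵥ (W *ᵥ u) + u ⬝ᵥ (W *ᵥ v) = 0 := by
    have h0 : u ⬝ᵥ y = 0 := hy a
    rw [hyW, mulVec_add, dotProduct_add] at h0
    exact h0
  have hkey : y ⬝ᵥ Wi *ᵥ y = v ⬝ᵥ (W *ᵥ v) - u ⬝ᵥ (W *ᵥ u) := by
    rw [h1, hyu, h2]; linarith
  rcases eq_or_ne a 0 with ha | ha
  · rcases eq_or_ne b 0 with hb | hb
    · exfalso
      apply hy0
      have huv : u + v = 0 := by rw [hu, hv, ha, hb]; simp
      rw [hyW, huv]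
      simp
    · have hvv := hV b hb
      have huu : u = 0 := by rw [hu, ha]; simp
      rw [hkey, huu, hv]
      have : (0 : m → ℝ) ⬝ᵥ W *ᵥ (0 : m → ℝ) = 0 := by simp
      rw [this]
      linarith
  · have huu := hT a ha
    have hvv : v ⬝ᵥ (W *ᵥ v) ≤ 0 := by
      rcases eq_or_ne b 0 with hb | hb
      · rw [hv, hb]; simp
      · exact (hV b hb).le
    rw [hkey]; linarith

private lemma uniform_abs {μ : Type*} [Fintype μ] {φ : ℕ} (hφ : 0 < φ)
    (G : ℕ → Matrix μ μ ℝ) (hper : ∀ k, G (k + φ) = G k) :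
    ∃ c : ℝ, 0 < c ∧ ∀ (k : ℕ) (v : μ → ℝ), |v ⬝ᵥ G k *ᵥ v| ≤ c * (v ⬝ᵥ v) := by
  choose f hf0 hfb using fun k => quad_abs_bound (G k)
  have hne : (Finset.range φ).Nonempty := ⟨0, Finset.mem_range.mpr hφ⟩
  refine ⟨Finset.sup' (Finset.range φ) hne f, ?_, ?_⟩
  · exact lt_of_lt_of_le (hf0 0) (Finset.le_sup' f (Finset.mem_range.mpr hφ))
  · intro k v
    have hmem : k % φ ∈ Finset.range φ := Finset.mem_range.mpr (Nat.mod_lt _ hφ)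
    rw [per_mod φ hφ G hper k]
    exact le_trans (hfb (k % φ) v)
      (mul_le_mul_of_nonneg_right (Finset.le_sup' f hmem) (dot_self_nonneg v))

private lemma uniform_margin {μ : Type*} [Fintype μ] [DecidableEq μ] {φ : ℕ} (hφ : 0 < φ)
    (G : ℕ → Matrix μ μ ℝ) (hper : ∀ k, G (k + φ) = G k) (hpd : ∀ k, (G k).PosDef) :
    ∃ ε : ℝ, 0 < ε ∧ ∀ (k : ℕ) (v : μ → ℝ), ε * (v ⬝ᵥ v) ≤ v ⬝ᵥ G k *ᵥ v := by
  choose f hf0 hfb using fun k => posdef_margin (hpd k)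
  have hne : (Finset.range φ).Nonempty := ⟨0, Finset.mem_range.mpr hφ⟩
  refine ⟨Finset.inf' (Finset.range φ) hne f, ?_, ?_⟩
  · exact (Finset.lt_inf'_iff hne).mpr fun b _ => hf0 b
  · intro k v
    have hmem : k % φ ∈ Finset.range φ := Finset.mem_range.mpr (Nat.mod_lt _ hφ)
    rw [per_mod φ hφ G hper k]
    exact le_trans
      (mul_le_mul_of_nonneg_right (Finset.inf'_le f hmem) (dot_self_nonneg v))
      (hfb (k % φ) v)

set_option maxHeartbeats 1000000

/-- Infinite-horizon robust quadratic performance for periodically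
time-varying systems (core of Corollary 7 of the paper). `Qpt`, `Spt`, `Rpt` are
the blocks of the inverse of the performance index
`Π(k) = [[Qp(k), Sp(k)], [Sp(k)ᵀ, Rp(k)]]`; `w̄ ∈ ℓ₂` is formalised as
summability of `k ↦ w̄(k)ᵀw̄(k)`. -/
theorem periodic_infinite_horizon_robust_performance
    {n p q : ℕ} (φ : ℕ) (hφ : 0 < φ)
    (Acl : ℕ → Matrix (Fin n) (Fin n) ℝ) (Ecl : ℕ → Matrix (Fin n) (Fin p) ℝ)
    (Ccl : ℕ → Matrix (Fin q) (Fin n) ℝ) (Dcl : ℕ → Matrix (Fin q) (Fin p) ℝ)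
    (Qp : ℕ → Matrix (Fin p) (Fin p) ℝ) (Sp : ℕ → Matrix (Fin p) (Fin q) ℝ)
    (Rp : ℕ → Matrix (Fin q) (Fin q) ℝ)
    (Qpt : ℕ → Matrix (Fin p) (Fin p) ℝ) (Spt : ℕ → Matrix (Fin p) (Fin q) ℝ)
    (Rpt : ℕ → Matrix (Fin q) (Fin q) ℝ)
    (hQpSymm : ∀ k, (Qp k).IsSymm) (hRpSymm : ∀ k, (Rp k).IsSymm)
    (hRpPSD : ∀ k, (Rp k).PosSemidef)
    (hQptND : ∀ k, (-(Qpt k)).PosDef)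
    (hinv : ∀ k,
      Matrix.fromBlocks (Qp k) (Sp k) ((Sp k)ᵀ) (Rp k) *
        Matrix.fromBlocks (Qpt k) (Spt k) ((Spt k)ᵀ) (Rpt k) = 1)
    -- φ-periodicity of the system and of the performance index:
    (hAper : ∀ k, Acl (k + φ) = Acl k) (hEper : ∀ k, Ecl (k + φ) = Ecl k)
    (hCper : ∀ k, Ccl (k + φ) = Ccl k) (hDper : ∀ k, Dcl (k + φ) = Dcl k)
    (hQpPer : ∀ k, Qp (k + φ) = Qp k) (hSpPer : ∀ k, Sp (k + φ) = Sp k)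
    (hRpPer : ∀ k, Rp (k + φ) = Rp k)
    (P : ℕ → Matrix (Fin n) (Fin n) ℝ)
    (hPper : ∀ k, P (k + φ) = P k)
    (hP : ∀ k, (P k).PosDef)
    -- the quadratic matrix inequality T(k)ᵀ Φ(k) T(k) ≻ 0 for all k ≥ 0:
    (hQMI : ∀ k : ℕ,
      ((Matrix.fromRows
          (Matrix.fromRows
            (Matrix.fromCols ((Acl k)ᵀ) ((Ccl k)ᵀ))
            (Matrix.fromCols (1 : Matrix (Fin n) (Fin n) ℝ)
              (0 : Matrix (Fin n) (Fin q) ℝ)))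
          (Matrix.fromRows
            (Matrix.fromCols ((Ecl k)ᵀ) ((Dcl k)ᵀ))
            (Matrix.fromCols (0 : Matrix (Fin q) (Fin n) ℝ)
              (1 : Matrix (Fin q) (Fin q) ℝ))))ᵀ *
        Matrix.fromBlocks
          (Matrix.fromBlocks (-(P k)) 0 0 (P (k + 1))) 0 0
          (Matrix.fromBlocks (Qpt k) (-(Spt k)) (-((Spt k)ᵀ)) (Rpt k)) *
        (Matrix.fromRows
          (Matrix.fromRows
            (Matrix.fromCols ((Acl k)ᵀ) ((Ccl k)ᵀ))
            (Matrix.fromCols (1 : Matrix (Fin n) (Fin n) ℝ)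
              (0 : Matrix (Fin n) (Fin q) ℝ)))
          (Matrix.fromRows
            (Matrix.fromCols ((Ecl k)ᵀ) ((Dcl k)ᵀ))
            (Matrix.fromCols (0 : Matrix (Fin q) (Fin n) ℝ)
              (1 : Matrix (Fin q) (Fin q) ℝ))))).PosDef) :
    ∃ ε : ℝ, 0 < ε ∧
      ∀ (w : ℕ → Fin p → ℝ) (x : ℕ → Fin n → ℝ) (z : ℕ → Fin q → ℝ),
        Summable (fun k => (w k) ⬝ᵥ (w k)) →
        x 0 = 0 →
        (∀ k : ℕ, x (k + 1) = (Acl k).mulVec (x k) + (Ecl k).mulVec (w k)) →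
        (∀ k : ℕ, z k = (Ccl k).mulVec (x k) + (Dcl k).mulVec (w k)) →
        Summable (fun k =>
          (Sum.elim (w k) (z k)) ⬝ᵥ
            ((Matrix.fromBlocks (Qp k) (Sp k) ((Sp k)ᵀ) (Rp k)).mulVec
              (Sum.elim (w k) (z k)))) ∧
        (∑' k : ℕ,
          (Sum.elim (w k) (z k)) ⬝ᵥ
            ((Matrix.fromBlocks (Qp k) (Sp k) ((Sp k)ᵀ) (Rp k)).mulVec
              (Sum.elim (w k) (z k))))
          + ε * ∑' k : ℕ, (w k) ⬝ᵥ (w k) ≤ 0 := by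
  classical
  -- inverse storage function X = P⁻¹
  set X : ℕ → Matrix (Fin n) (Fin n) ℝ := fun k => (P k)⁻¹ with hXdef
  have hPX : ∀ k, P k * X k = 1 := fun k =>
    Matrix.mul_nonsing_inv _ (isUnit_iff_ne_zero.mpr (hP k).det_pos.ne')
  have hXpd : ∀ k, (X k).PosDef := fun k => (hP k).inv
  have hXper : ∀ k, X (k + φ) = X k := fun k => by
    simp only [hXdef, hPper k]
  have hsymX : ∀ k, (X k)ᵀ = X k := fun k => by
    rw [← real_conjT]; exact (hXpd k).1
  have hsymP : ∀ k, (P k)ᵀ = P k := fun k => by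
    rw [← real_conjT]; exact (hP k).1
  -- performance index and its inverse
  set Pm : ℕ → Matrix (Fin p ⊕ Fin q) (Fin p ⊕ Fin q) ℝ :=
    fun k => Matrix.fromBlocks (Qp k) (Sp k) ((Sp k)ᵀ) (Rp k) with hPmdef
  set Pt : ℕ → Matrix (Fin p ⊕ Fin q) (Fin p ⊕ Fin q) ℝ :=
    fun k => Matrix.fromBlocks (Qpt k) (Spt k) ((Spt k)ᵀ) (Rpt k) with hPtdef
  have hinv' : ∀ k, Pm k * Pt k = 1 := fun k => hinv k
  have htilde : ∀ k, Pt k * Pm k = 1 := fun k => mul_eq_one_comm.mp (hinv' k)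
  have hPmsym : ∀ k, (Pm k)ᵀ = Pm k := fun k => by
    simp only [hPmdef, fromBlocks_transpose, transpose_transpose, (hQpSymm k).eq, (hRpSymm k).eq]
  have hPtsym : ∀ k, (Pt k)ᵀ = Pt k := by
    intro k
    calc (Pt k)ᵀ = (Pt k)ᵀ * (Pm k * Pt k) := by rw [hinv' k, mul_one]
      _ = ((Pt k)ᵀ * (Pm k)ᵀ) * Pt k := by rw [hPmsym k, Matrix.mul_assoc]
      _ = (Pm k * Pt k)ᵀ * Pt k := by rw [transpose_mul]
      _ = Pt k := by rw [hinv' k, transpose_one, Matrix.one_mul]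
  have hQptsym : ∀ k, (Qpt k)ᵀ = Qpt k := by
    intro k
    have h := hPtsym k
    simp only [hPtdef, fromBlocks_transpose, transpose_transpose] at h
    have := congrArg Matrix.toBlocks₁₁ h
    simpa only [Matrix.toBlocks_fromBlocks₁₁] using this
  have hRptsym : ∀ k, (Rpt k)ᵀ = Rpt k := by
    intro k
    have h := hPtsym k
    simp only [hPtdef, fromBlocks_transpose, transpose_transpose] at h
    have := congrArg Matrix.toBlocks₂₂ h
    simpa only [Matrix.toBlocks_fromBlocks₂₂] using this
  -- the dual quadratic-inequality matrices
  set Wk : ℕ → Matrix ((Fin n ⊕ Fin n) ⊕ (Fin p ⊕ Fin q)) ((Fin n ⊕ Fin n) ⊕ (Fin p ⊕ Fin q)) ℝ :=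
    fun k => Matrix.fromBlocks
      (Matrix.fromBlocks (-(P k)) 0 0 (P (k + 1))) 0 0
      (Matrix.fromBlocks (Qpt k) (-(Spt k)) (-((Spt k)ᵀ)) (Rpt k)) with hWkdef
  set Wik : ℕ → Matrix ((Fin n ⊕ Fin n) ⊕ (Fin p ⊕ Fin q)) ((Fin n ⊕ Fin n) ⊕ (Fin p ⊕ Fin q)) ℝ :=
    fun k => Matrix.fromBlocks
      (Matrix.fromBlocks (-(X k)) 0 0 (X (k + 1))) 0 0
      (Matrix.fromBlocks (Qp k) (-(Sp k)) (-((Sp k)ᵀ)) (Rp k)) with hWikdef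
  have hWWi : ∀ k, Wk k * Wik k = 1 := by
    intro k
    have hb := htilde k
    simp only [hPtdef, hPmdef, fromBlocks_multiply] at hb
    rw [← fromBlocks_one] at hb
    have e11 : Qpt k * Qp k + Spt k * (Sp k)ᵀ = 1 := by
      have := congrArg Matrix.toBlocks₁₁ hb
      simpa only [Matrix.toBlocks_fromBlocks₁₁] using this
    have e12 : Qpt k * Sp k + Spt k * Rp k = 0 := by
      have := congrArg Matrix.toBlocks₁₂ hb
      simpa only [Matrix.toBlocks_fromBlocks₁₂] using this
    have e21 : (Spt k)ᵀ * Qp k + Rpt k * (Sp k)ᵀ = 0 := by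
      have := congrArg Matrix.toBlocks₂₁ hb
      simpa only [Matrix.toBlocks_fromBlocks₂₁] using this
    have e22 : (Spt k)ᵀ * Sp k + Rpt k * Rp k = 1 := by
      have := congrArg Matrix.toBlocks₂₂ hb
      simpa only [Matrix.toBlocks_fromBlocks₂₂] using this
    have htop : Matrix.fromBlocks (-(P k)) 0 0 (P (k + 1)) *
        Matrix.fromBlocks (-(X k)) 0 0 (X (k + 1)) = 1 := by
      rw [fromBlocks_multiply]
      simp only [Matrix.mul_zero, Matrix.zero_mul, add_zero, zero_add, Matrix.neg_mul,
        Matrix.mul_neg, neg_neg, neg_zero]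
      rw [hPX k, hPX (k + 1), fromBlocks_one]
    have hbot : Matrix.fromBlocks (Qpt k) (-(Spt k)) (-((Spt k)ᵀ)) (Rpt k) *
        Matrix.fromBlocks (Qp k) (-(Sp k)) (-((Sp k)ᵀ)) (Rp k) = 1 := by
      rw [fromBlocks_multiply]
      have b11 : Qpt k * Qp k + -Spt k * -(Sp k)ᵀ = 1 := by
        rw [Matrix.neg_mul, Matrix.mul_neg, neg_neg]; exact e11
      have b12 : Qpt k * -Sp k + -Spt k * Rp k = 0 := by
        rw [Matrix.mul_neg, Matrix.neg_mul, ← neg_add, e12, neg_zero]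
      have b21 : -(Spt k)ᵀ * Qp k + Rpt k * -(Sp k)ᵀ = 0 := by
        rw [Matrix.neg_mul, Matrix.mul_neg, ← neg_add, e21, neg_zero]
      have b22 : -(Spt k)ᵀ * -Sp k + Rpt k * Rp k = 1 := by
        rw [Matrix.neg_mul, Matrix.mul_neg, neg_neg]; exact e22
      rw [b11, b12, b21, b22, fromBlocks_one]
    simp only [hWkdef, hWikdef]
    rw [fromBlocks_multiply]
    simp only [Matrix.mul_zero, Matrix.zero_mul, add_zero, zero_add]
    rw [htop, hbot, fromBlocks_one]
  have hWsym : ∀ k, (Wk k)ᵀ = Wk k := by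
    intro k
    simp only [hWkdef, fromBlocks_transpose, transpose_neg, transpose_zero,
      transpose_transpose, hsymP k, hsymP (k + 1), hQptsym k, hRptsym k]
  have hWisym : ∀ k, (Wik k)ᵀ = Wik k := by
    intro k
    simp only [hWikdef, fromBlocks_transpose, transpose_neg, transpose_zero,
      transpose_transpose, hsymX k, hsymX (k + 1), (hQpSymm k).eq, (hRpSymm k).eq]
  -- T(k)
  set Tk : ℕ → Matrix ((Fin n ⊕ Fin n) ⊕ (Fin p ⊕ Fin q)) (Fin n ⊕ Fin q) ℝ :=
    fun k => Matrix.fromRows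
      (Matrix.fromRows (Matrix.fromCols ((Acl k)ᵀ) ((Ccl k)ᵀ))
        (Matrix.fromCols (1 : Matrix (Fin n) (Fin n) ℝ) (0 : Matrix (Fin n) (Fin q) ℝ)))
      (Matrix.fromRows (Matrix.fromCols ((Ecl k)ᵀ) ((Dcl k)ᵀ))
        (Matrix.fromCols (0 : Matrix (Fin q) (Fin n) ℝ) (1 : Matrix (Fin q) (Fin q) ℝ))) with hTkdef
  have hQMI' : ∀ k, ((Tk k)ᵀ * Wk k * Tk k).PosDef := fun k => hQMI k
  have hTmul : ∀ (k : ℕ) (a : (Fin n ⊕ Fin q) → ℝ), Tk k *ᵥ a =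
      Sum.elim (Sum.elim ((Acl k)ᵀ *ᵥ (a ∘ Sum.inl) + (Ccl k)ᵀ *ᵥ (a ∘ Sum.inr)) (a ∘ Sum.inl))
        (Sum.elim ((Ecl k)ᵀ *ᵥ (a ∘ Sum.inl) + (Dcl k)ᵀ *ᵥ (a ∘ Sum.inr)) (a ∘ Sum.inr)) := by
    intro k a
    conv_lhs => rw [← Sum.elim_comp_inl_inr a]
    simp only [hTkdef, fromRows_mulVec, fromCols_mulVec_sumElim, one_mulVec,
      zero_mulVec, add_zero, zero_add]
  have hTpos : ∀ (k : ℕ) (a : (Fin n ⊕ Fin q) → ℝ), a ≠ 0 →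
      0 < (Tk k *ᵥ a) ⬝ᵥ Wk k *ᵥ (Tk k *ᵥ a) := by
    intro k a ha
    have h := (hQMI' k).dotProduct_mulVec_pos ha
    rw [star_pi_real, ← mulVec_mulVec, ← mulVec_mulVec, dotProduct_mulVec,
      vecMul_transpose] at h
    exact h
  -- the explicit negative subspace
  set Vm : Matrix ((Fin n ⊕ Fin n) ⊕ (Fin p ⊕ Fin q)) (Fin n ⊕ Fin p) ℝ :=
    Matrix.fromRows
      (Matrix.fromRows
        (Matrix.fromCols (1 : Matrix (Fin n) (Fin n) ℝ) (0 : Matrix (Fin n) (Fin p) ℝ))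
        (0 : Matrix (Fin n) (Fin n ⊕ Fin p) ℝ))
      (Matrix.fromRows
        (Matrix.fromCols (0 : Matrix (Fin p) (Fin n) ℝ) (1 : Matrix (Fin p) (Fin p) ℝ))
        (0 : Matrix (Fin q) (Fin n ⊕ Fin p) ℝ)) with hVmdef
  have hVmmul : ∀ b : (Fin n ⊕ Fin p) → ℝ, Vm *ᵥ b =
      Sum.elim (Sum.elim (b ∘ Sum.inl) 0) (Sum.elim (b ∘ Sum.inr) 0) := by
    intro b
    conv_lhs => rw [← Sum.elim_comp_inl_inr b]
    simp only [hVmdef, fromRows_mulVec, fromCols_mulVec_sumElim, one_mulVec,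
      zero_mulVec, add_zero, zero_add]
  have hVneg : ∀ (k : ℕ) (b : (Fin n ⊕ Fin p) → ℝ), b ≠ 0 →
      (Vm *ᵥ b) ⬝ᵥ Wk k *ᵥ (Vm *ᵥ b) < 0 := by
    intro k b hb
    rw [hVmmul b]
    simp only [hWkdef, fromBlocks_mulVec, Sum.elim_comp_inl, Sum.elim_comp_inr,
      sumElim_dotProduct_sumElim,
      zero_mulVec, mulVec_zero, add_zero, zero_add, Matrix.neg_mulVec,
      dotProduct_neg, neg_dotProduct, dotProduct_zero, zero_dotProduct]
    -- goal should now be: -(ξ ⬝ᵥ P k *ᵥ ξ) + (ζ ⬝ᵥ Qpt k *ᵥ ζ) < 0 (modulo shape)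
    have hbz : ¬(b ∘ Sum.inl = 0 ∧ b ∘ Sum.inr = 0) := by
      rintro ⟨h1, h2⟩
      apply hb
      funext i
      cases i with
      | inl i => exact congrFun h1 i
      | inr i => exact congrFun h2 i
    have hQle : (b ∘ Sum.inr) ⬝ᵥ Qpt k *ᵥ (b ∘ Sum.inr) ≤ 0 := by
      have h := (hQptND k).posSemidef.dotProduct_mulVec_nonneg (b ∘ Sum.inr)
      rw [star_pi_real, Matrix.neg_mulVec, dotProduct_neg] at h
      linarith
    have hPge : 0 ≤ (b ∘ Sum.inl) ⬝ᵥ P k *ᵥ (b ∘ Sum.inl) := by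
      have h := (hP k).posSemidef.dotProduct_mulVec_nonneg (b ∘ Sum.inl)
      rwa [star_pi_real] at h
    rcases eq_or_ne (b ∘ Sum.inl) 0 with h1 | h1
    · have h2 : b ∘ Sum.inr ≠ 0 := fun h2 => hbz ⟨h1, h2⟩
      have h := (hQptND k).dotProduct_mulVec_pos h2
      rw [star_pi_real, Matrix.neg_mulVec, dotProduct_neg] at h
      linarith
    · have h := (hP k).dotProduct_mulVec_pos h1
      rw [star_pi_real] at h
      linarith
  have hinj : ∀ (k : ℕ) (a : (Fin n ⊕ Fin q) → ℝ) (b : (Fin n ⊕ Fin p) → ℝ),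
      Tk k *ᵥ a + Vm *ᵥ b = 0 → a = 0 ∧ b = 0 := by
    intro k a b hab
    have hneg : Tk k *ᵥ a = -(Vm *ᵥ b) := eq_neg_of_add_eq_zero_left hab
    by_cases ha : a = 0
    · subst ha
      rw [mulVec_zero, zero_add] at hab
      constructor
      · rfl
      · by_contra hb
        have := hVneg k b hb
        rw [hab] at this
        simp at this
    · exfalso
      have h1 := hTpos k a ha
      rw [hneg] at h1
      rw [Matrix.mulVec_neg, dotProduct_neg, neg_dotProduct, neg_neg] at h1
      rcases eq_or_ne b 0 with hb | hb
      · rw [hb, mulVec_zero] at h1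
        simp at h1
      · have h2 := hVneg k b hb
        linarith
  have hcard : Fintype.card (Fin n ⊕ Fin q) + Fintype.card (Fin n ⊕ Fin p)
      = Fintype.card ((Fin n ⊕ Fin n) ⊕ (Fin p ⊕ Fin q)) := by
    simp [Fintype.card_sum]
    omega
  have hsurj : ∀ (k : ℕ) (y : ((Fin n ⊕ Fin n) ⊕ (Fin p ⊕ Fin q)) → ℝ),
      ∃ a b, Tk k *ᵥ a + Vm *ᵥ b = y :=
    fun k => surj_of_inj (Tk k) Vm hcard (hinj k)
  -- annihilator matrix and the primal dissipation matrix
  set Va : ℕ → Matrix ((Fin n ⊕ Fin n) ⊕ (Fin p ⊕ Fin q)) (Fin n ⊕ Fin p) ℝ :=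
    fun k => Matrix.fromRows
      (Matrix.fromRows
        (Matrix.fromCols (1 : Matrix (Fin n) (Fin n) ℝ) (0 : Matrix (Fin n) (Fin p) ℝ))
        (Matrix.fromCols (-(Acl k)) (-(Ecl k))))
      (Matrix.fromRows
        (Matrix.fromCols (0 : Matrix (Fin p) (Fin n) ℝ) (1 : Matrix (Fin p) (Fin p) ℝ))
        (Matrix.fromCols (-(Ccl k)) (-(Dcl k)))) with hVadef
  have hVamul : ∀ (k : ℕ) (x : Fin n → ℝ) (w : Fin p → ℝ),
      Va k *ᵥ Sum.elim x w = Sum.elim (Sum.elim x (-(Acl k *ᵥ x + Ecl k *ᵥ w)))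
        (Sum.elim w (-(Ccl k *ᵥ x + Dcl k *ᵥ w))) := by
    intro k x w
    simp only [hVadef, fromRows_mulVec, fromCols_mulVec_sumElim, one_mulVec,
      zero_mulVec, add_zero, zero_add, Matrix.neg_mulVec, neg_add]
  have hAnn : ∀ (k : ℕ) (x : Fin n → ℝ) (w : Fin p → ℝ) (a : (Fin n ⊕ Fin q) → ℝ),
      (Tk k *ᵥ a) ⬝ᵥ (Va k *ᵥ Sum.elim x w) = 0 := by
    intro k x w a
    rw [hTmul, hVamul]
    simp only [sumElim_dotProduct_sumElim, add_dotProduct, dotProduct_neg,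
      dotProduct_add, mulVec_transpose, ← dotProduct_mulVec]
    ring
  have hQform : ∀ (k : ℕ) (x : Fin n → ℝ) (w : Fin p → ℝ),
      (Va k *ᵥ Sum.elim x w) ⬝ᵥ Wik k *ᵥ (Va k *ᵥ Sum.elim x w)
        = (Acl k *ᵥ x + Ecl k *ᵥ w) ⬝ᵥ (X (k + 1) *ᵥ (Acl k *ᵥ x + Ecl k *ᵥ w))
          - x ⬝ᵥ (X k *ᵥ x)
          + (Sum.elim w (Ccl k *ᵥ x + Dcl k *ᵥ w)) ⬝ᵥ
              (Pm k *ᵥ Sum.elim w (Ccl k *ᵥ x + Dcl k *ᵥ w)) := by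
    intro k x w
    rw [hVamul]
    simp only [hWikdef, hPmdef, fromBlocks_mulVec, Sum.elim_comp_inl, Sum.elim_comp_inr,
      sumElim_dotProduct_sumElim, zero_mulVec, mulVec_zero, add_zero, zero_add,
      Matrix.neg_mulVec, mulVec_neg, dotProduct_neg, neg_dotProduct, neg_neg,
      dotProduct_zero, zero_dotProduct,
      dotProduct_add, add_dotProduct, mulVec_add]
    ring
  set Mk : ℕ → Matrix (Fin n ⊕ Fin p) (Fin n ⊕ Fin p) ℝ :=
    fun k => (Va k)ᵀ * Wik k * Va k with hMkdef
  have hMform : ∀ (k : ℕ) (c : (Fin n ⊕ Fin p) → ℝ),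
      c ⬝ᵥ Mk k *ᵥ c = (Va k *ᵥ c) ⬝ᵥ Wik k *ᵥ (Va k *ᵥ c) := by
    intro k c
    simp only [hMkdef]
    rw [← mulVec_mulVec, ← mulVec_mulVec, dotProduct_mulVec, vecMul_transpose]
  have hMsym : ∀ k, (Mk k)ᵀ = Mk k := by
    intro k
    simp only [hMkdef]
    rw [transpose_mul, transpose_mul, transpose_transpose, hWisym k, Matrix.mul_assoc]
  have hMneg : ∀ k, (-(Mk k)).PosDef := by
    intro k
    refine Matrix.PosDef.of_dotProduct_mulVec_pos ?_ ?_
    · show (-(Mk k))ᴴ = -(Mk k)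
      rw [real_conjT, transpose_neg, hMsym k]
    · intro c hc
      rw [star_pi_real]
      have hc' : c = Sum.elim (c ∘ Sum.inl) (c ∘ Sum.inr) := (Sum.elim_comp_inl_inr c).symm
      have hy0 : Va k *ᵥ c ≠ 0 := by
        intro h0
        apply hc
        rw [hc', hVamul] at h0
        funext i
        cases i with
        | inl i => exact congrFun h0 (Sum.inl (Sum.inl i))
        | inr i => exact congrFun h0 (Sum.inr (Sum.inl i))
      have hy : ∀ a : (Fin n ⊕ Fin q) → ℝ, (Tk k *ᵥ a) ⬝ᵥ (Va k *ᵥ c) = 0 := by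
        intro a
        conv_lhs => rw [hc']
        rw [hVamul, ← hVamul]
        exact hAnn k _ _ a
      have hlt : (Va k *ᵥ c) ⬝ᵥ Wik k *ᵥ (Va k *ᵥ c) < 0 :=
        dual_key (Wk k) (Wik k) (hWsym k) (hWWi k) (Tk k) Vm (hTpos k) (hVneg k)
          (hsurj k) (Va k *ᵥ c) hy hy0
      rw [Matrix.neg_mulVec, dotProduct_neg, hMform]
      linarith
  have hMper : ∀ k, Mk (k + φ) = Mk k := by
    intro k
    have hVaper : Va (k + φ) = Va k := by
      simp only [hVadef]
      rw [hAper k, hEper k, hCper k, hDper k]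
    have hWiper : Wik (k + φ) = Wik k := by
      simp only [hWikdef]
      rw [hXper k, show k + φ + 1 = (k + 1) + φ from by omega, hXper (k + 1),
        hQpPer k, hSpPer k, hRpPer k]
    simp only [hMkdef]
    rw [hVaper, hWiper]
  -- uniform strict-dissipation margin
  obtain ⟨ε, hε, hmarg⟩ := uniform_margin hφ (fun k => -(Mk k))
    (fun k => by simp only [hMper k]) hMneg
  have hmaster : ∀ (k : ℕ) (x : Fin n → ℝ) (w : Fin p → ℝ),
      (Acl k *ᵥ x + Ecl k *ᵥ w) ⬝ᵥ (X (k + 1) *ᵥ (Acl k *ᵥ x + Ecl k *ᵥ w))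
        - x ⬝ᵥ (X k *ᵥ x)
        + (Sum.elim w (Ccl k *ᵥ x + Dcl k *ᵥ w)) ⬝ᵥ
            (Pm k *ᵥ Sum.elim w (Ccl k *ᵥ x + Dcl k *ᵥ w))
      ≤ -(ε * (x ⬝ᵥ x)) - ε * (w ⬝ᵥ w) := by
    intro k x w
    have h := hmarg k (Sum.elim x w)
    rw [Matrix.neg_mulVec, dotProduct_neg, hMform, hQform,
      sumElim_dotProduct_sumElim] at h
    linarith
  -- uniform bounds on the various quadratic forms
  obtain ⟨cQ, hcQ, hbQ⟩ := uniform_abs hφ Qp hQpPer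
  obtain ⟨cS, hcS, hbS⟩ := uniform_abs hφ (fun k => Sp k * (Sp k)ᵀ)
    (fun k => by rw [hSpPer k])
  obtain ⟨cC, hcC, hbC⟩ := uniform_abs hφ (fun k => (Ccl k)ᵀ * Ccl k)
    (fun k => by rw [hCper k])
  obtain ⟨cD, hcD, hbD⟩ := uniform_abs hφ (fun k => (Dcl k)ᵀ * Dcl k)
    (fun k => by rw [hDper k])
  obtain ⟨cR, hcR, hbR⟩ := uniform_abs hφ Rp hRpPer
  -- quadratic form rewritings
  have hsqC : ∀ (k : ℕ) (v : Fin n → ℝ),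
      (Ccl k *ᵥ v) ⬝ᵥ (Ccl k *ᵥ v) ≤ cC * (v ⬝ᵥ v) := by
    intro k v
    have he : v ⬝ᵥ ((Ccl k)ᵀ * Ccl k) *ᵥ v = (Ccl k *ᵥ v) ⬝ᵥ (Ccl k *ᵥ v) := by
      rw [← mulVec_mulVec, dotProduct_mulVec, vecMul_transpose]
    rw [← he]
    exact le_trans (le_abs_self _) (hbC k v)
  have hsqD : ∀ (k : ℕ) (v : Fin p → ℝ),
      (Dcl k *ᵥ v) ⬝ᵥ (Dcl k *ᵥ v) ≤ cD * (v ⬝ᵥ v) := by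
    intro k v
    have he : v ⬝ᵥ ((Dcl k)ᵀ * Dcl k) *ᵥ v = (Dcl k *ᵥ v) ⬝ᵥ (Dcl k *ᵥ v) := by
      rw [← mulVec_mulVec, dotProduct_mulVec, vecMul_transpose]
    rw [← he]
    exact le_trans (le_abs_self _) (hbD k v)
  have hsqS : ∀ (k : ℕ) (v : Fin p → ℝ),
      ((Sp k)ᵀ *ᵥ v) ⬝ᵥ ((Sp k)ᵀ *ᵥ v) ≤ cS * (v ⬝ᵥ v) := by
    intro k v
    have he : v ⬝ᵥ (Sp k * (Sp k)ᵀ) *ᵥ v = ((Sp k)ᵀ *ᵥ v) ⬝ᵥ ((Sp k)ᵀ *ᵥ v) := by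
      rw [← mulVec_mulVec, dotProduct_mulVec, mulVec_transpose]
    rw [← he]
    exact le_trans (le_abs_self _) (hbS k v)
  -- expansion of the performance quadratic form
  have hsform : ∀ (k : ℕ) (wv : Fin p → ℝ) (zv : Fin q → ℝ),
      Sum.elim wv zv ⬝ᵥ Pm k *ᵥ Sum.elim wv zv
        = wv ⬝ᵥ (Qp k *ᵥ wv) + 2 * (((Sp k)ᵀ *ᵥ wv) ⬝ᵥ zv) + zv ⬝ᵥ (Rp k *ᵥ zv) := by
    intro k wv zv
    simp only [hPmdef, fromBlocks_mulVec, Sum.elim_comp_inl, Sum.elim_comp_inr,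
      sumElim_dotProduct_sumElim, dotProduct_add]
    have h1 : wv ⬝ᵥ (Sp k *ᵥ zv) = ((Sp k)ᵀ *ᵥ wv) ⬝ᵥ zv := by
      rw [dotProduct_mulVec, ← mulVec_transpose]
    have h2 : zv ⬝ᵥ ((Sp k)ᵀ *ᵥ wv) = ((Sp k)ᵀ *ᵥ wv) ⬝ᵥ zv := dotProduct_comm _ _
    rw [h1, h2]
    ring
  -- bounds on the performance quadratic form
  have hzz : ∀ (k : ℕ) (xv : Fin n → ℝ) (wv : Fin p → ℝ),
      (Ccl k *ᵥ xv + Dcl k *ᵥ wv) ⬝ᵥ (Ccl k *ᵥ xv + Dcl k *ᵥ wv)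
        ≤ 2 * cC * (xv ⬝ᵥ xv) + 2 * cD * (wv ⬝ᵥ wv) := by
    intro k xv wv
    have he : (Ccl k *ᵥ xv + Dcl k *ᵥ wv) ⬝ᵥ (Ccl k *ᵥ xv + Dcl k *ᵥ wv)
        = (Ccl k *ᵥ xv) ⬝ᵥ (Ccl k *ᵥ xv) + 2 * ((Ccl k *ᵥ xv) ⬝ᵥ (Dcl k *ᵥ wv))
          + (Dcl k *ᵥ wv) ⬝ᵥ (Dcl k *ᵥ wv) := by
      simp only [add_dotProduct, dotProduct_add, dotProduct_comm (Dcl k *ᵥ wv) (Ccl k *ᵥ xv)]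
      ring
    have hy := young_abs (Ccl k *ᵥ xv) (Dcl k *ᵥ wv)
    have hy2 : 2 * ((Ccl k *ᵥ xv) ⬝ᵥ (Dcl k *ᵥ wv))
        ≤ (Ccl k *ᵥ xv) ⬝ᵥ (Ccl k *ᵥ xv) + (Dcl k *ᵥ wv) ⬝ᵥ (Dcl k *ᵥ wv) := by
      have := le_abs_self ((Ccl k *ᵥ xv) ⬝ᵥ (Dcl k *ᵥ wv))
      linarith
    have h1 := hsqC k xv
    have h2 := hsqD k wv
    rw [he]
    linarith
  -- Young-parameter and derived constants
  set θ : ℝ := ε / (4 * cC + 1) with hθdef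
  have hθ : 0 < θ := by rw [hθdef]; positivity
  have hθC : 2 * (θ * cC) ≤ ε / 2 := by
    have hd : 0 < 4 * cC + 1 := by positivity
    have hmul : θ * (4 * cC + 1) = ε := by
      rw [hθdef]; field_simp
    nlinarith [hθ.le, hcC.le]
  set cw : ℝ := cQ + θ⁻¹ * cS + 2 * (θ * cD) with hcwdef
  have hcw : 0 < cw := by
    have : 0 < θ⁻¹ := by positivity
    rw [hcwdef]; positivity
  -- lower bound on the performance quadratic form
  have hslow : ∀ (k : ℕ) (xv : Fin n → ℝ) (wv : Fin p → ℝ),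
      -((ε / 2) * (xv ⬝ᵥ xv)) - cw * (wv ⬝ᵥ wv)
        ≤ Sum.elim wv (Ccl k *ᵥ xv + Dcl k *ᵥ wv) ⬝ᵥ
            (Pm k *ᵥ Sum.elim wv (Ccl k *ᵥ xv + Dcl k *ᵥ wv)) := by
    intro k xv wv
    rw [hsform]
    have hxx : (0:ℝ) ≤ xv ⬝ᵥ xv := dot_self_nonneg _
    have hww : (0:ℝ) ≤ wv ⬝ᵥ wv := dot_self_nonneg _
    have h1 : -(cQ * (wv ⬝ᵥ wv)) ≤ wv ⬝ᵥ (Qp k *ᵥ wv) := by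
      have := hbQ k wv
      have := neg_abs_le (wv ⬝ᵥ (Qp k *ᵥ wv))
      linarith
    have h2 := young_lower θ hθ ((Sp k)ᵀ *ᵥ wv) (Ccl k *ᵥ xv + Dcl k *ᵥ wv)
    have h3 := hsqS k wv
    have h4 := hzz k xv wv
    have h5 : 0 ≤ (Ccl k *ᵥ xv + Dcl k *ᵥ wv) ⬝ᵥ (Rp k *ᵥ (Ccl k *ᵥ xv + Dcl k *ᵥ wv)) := by
      have := (hRpPSD k).dotProduct_mulVec_nonneg (Ccl k *ᵥ xv + Dcl k *ᵥ wv)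
      rwa [star_pi_real] at this
    have hθi : 0 < θ⁻¹ := by positivity
    have hA : θ * ((Ccl k *ᵥ xv + Dcl k *ᵥ wv) ⬝ᵥ (Ccl k *ᵥ xv + Dcl k *ᵥ wv))
        ≤ θ * (2 * cC * (xv ⬝ᵥ xv) + 2 * cD * (wv ⬝ᵥ wv)) :=
      mul_le_mul_of_nonneg_left h4 hθ.le
    have hB : θ⁻¹ * (((Sp k)ᵀ *ᵥ wv) ⬝ᵥ ((Sp k)ᵀ *ᵥ wv)) ≤ θ⁻¹ * (cS * (wv ⬝ᵥ wv)) :=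
      mul_le_mul_of_nonneg_left h3 hθi.le
    have hCx : (2 * (θ * cC)) * (xv ⬝ᵥ xv) ≤ (ε / 2) * (xv ⬝ᵥ xv) :=
      mul_le_mul_of_nonneg_right hθC hxx
    rw [hcwdef]
    linarith [h2, hA, hB, hCx, h1, h5]
  -- absolute bound on the performance quadratic form
  set K : ℝ := cQ + cS + (1 + cR) * (2 * cC + 2 * cD) with hKdef
  have hKb : ∀ (k : ℕ) (xv : Fin n → ℝ) (wv : Fin p → ℝ),
      |Sum.elim wv (Ccl k *ᵥ xv + Dcl k *ᵥ wv) ⬝ᵥ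
          (Pm k *ᵥ Sum.elim wv (Ccl k *ᵥ xv + Dcl k *ᵥ wv))|
        ≤ K * (xv ⬝ᵥ xv + wv ⬝ᵥ wv) := by
    intro k xv wv
    rw [hsform]
    have hxx : (0:ℝ) ≤ xv ⬝ᵥ xv := dot_self_nonneg _
    have hww : (0:ℝ) ≤ wv ⬝ᵥ wv := dot_self_nonneg _
    have hzznn : (0:ℝ) ≤ (Ccl k *ᵥ xv + Dcl k *ᵥ wv) ⬝ᵥ (Ccl k *ᵥ xv + Dcl k *ᵥ wv) :=
      dot_self_nonneg _
    have h1 := hbQ k wv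
    have h2 := young_abs ((Sp k)ᵀ *ᵥ wv) (Ccl k *ᵥ xv + Dcl k *ᵥ wv)
    have h3 := hsqS k wv
    have h4 := hbR k (Ccl k *ᵥ xv + Dcl k *ᵥ wv)
    have h5 := hzz k xv wv
    have hcR1 : (0:ℝ) ≤ 1 + cR := by linarith
    have htri : |wv ⬝ᵥ (Qp k *ᵥ wv) + 2 * (((Sp k)ᵀ *ᵥ wv) ⬝ᵥ (Ccl k *ᵥ xv + Dcl k *ᵥ wv))
        + (Ccl k *ᵥ xv + Dcl k *ᵥ wv) ⬝ᵥ (Rp k *ᵥ (Ccl k *ᵥ xv + Dcl k *ᵥ wv))|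
        ≤ |wv ⬝ᵥ (Qp k *ᵥ wv)| + 2 * |((Sp k)ᵀ *ᵥ wv) ⬝ᵥ (Ccl k *ᵥ xv + Dcl k *ᵥ wv)|
          + |(Ccl k *ᵥ xv + Dcl k *ᵥ wv) ⬝ᵥ (Rp k *ᵥ (Ccl k *ᵥ xv + Dcl k *ᵥ wv))| := by
      have t1 := abs_add_le (wv ⬝ᵥ (Qp k *ᵥ wv)
        + 2 * (((Sp k)ᵀ *ᵥ wv) ⬝ᵥ (Ccl k *ᵥ xv + Dcl k *ᵥ wv)))
        ((Ccl k *ᵥ xv + Dcl k *ᵥ wv) ⬝ᵥ (Rp k *ᵥ (Ccl k *ᵥ xv + Dcl k *ᵥ wv)))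
      have t2 := abs_add_le (wv ⬝ᵥ (Qp k *ᵥ wv))
        (2 * (((Sp k)ᵀ *ᵥ wv) ⬝ᵥ (Ccl k *ᵥ xv + Dcl k *ᵥ wv)))
      have t3 : |2 * (((Sp k)ᵀ *ᵥ wv) ⬝ᵥ (Ccl k *ᵥ xv + Dcl k *ᵥ wv))|
          = 2 * |((Sp k)ᵀ *ᵥ wv) ⬝ᵥ (Ccl k *ᵥ xv + Dcl k *ᵥ wv)| := by
        rw [abs_mul]; simp
      rw [t3] at t2
      linarith
    have hz' := mul_le_mul_of_nonneg_left h5 hcR1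
    have m1 : (0:ℝ) ≤ cQ * (xv ⬝ᵥ xv) := mul_nonneg hcQ.le hxx
    have m2 : (0:ℝ) ≤ cS * (xv ⬝ᵥ xv) := mul_nonneg hcS.le hxx
    have m3 : (0:ℝ) ≤ (1 + cR) * (2 * cD) * (xv ⬝ᵥ xv) :=
      mul_nonneg (mul_nonneg hcR1 (by linarith)) hxx
    have m4 : (0:ℝ) ≤ (1 + cR) * (2 * cC) * (wv ⬝ᵥ wv) :=
      mul_nonneg (mul_nonneg hcR1 (by linarith)) hww
    rw [hKdef]
    linarith [htri, h1, h2, h3, h4, hz', m1, m2, m3, m4]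
  -- the trajectory argument
  refine ⟨ε, hε, ?_⟩
  intro w x z hsum hx0 hdyn hout
  have hVnn : ∀ k, 0 ≤ x k ⬝ᵥ (X k *ᵥ x k) := fun k => by
    have := (hXpd k).posSemidef.dotProduct_mulVec_nonneg (x k)
    rwa [star_pi_real] at this
  have hV0 : x 0 ⬝ᵥ (X 0 *ᵥ x 0) = 0 := by rw [hx0]; simp
  have hms : ∀ k, x (k + 1) ⬝ᵥ (X (k + 1) *ᵥ x (k + 1)) - x k ⬝ᵥ (X k *ᵥ x k)
      + Sum.elim (w k) (z k) ⬝ᵥ (Pm k *ᵥ Sum.elim (w k) (z k))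
      ≤ -(ε * (x k ⬝ᵥ x k)) - ε * (w k ⬝ᵥ w k) := by
    intro k
    have h := hmaster k (x k) (w k)
    rw [← hdyn k, ← hout k] at h
    exact h
  have hstep : ∀ k, x (k + 1) ⬝ᵥ (X (k + 1) *ᵥ x (k + 1))
      ≤ x k ⬝ᵥ (X k *ᵥ x k) - (ε / 2) * (x k ⬝ᵥ x k) + cw * (w k ⬝ᵥ w k) := by
    intro k
    have h1 := hms k
    have h2 := hslow k (x k) (w k)
    rw [← hout k] at h2
    have h3 : 0 ≤ w k ⬝ᵥ w k := dot_self_nonneg _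
    have h4 : 0 ≤ ε * (w k ⬝ᵥ w k) := mul_nonneg hε.le h3
    have h5 : 0 ≤ ε * (x k ⬝ᵥ x k) := mul_nonneg hε.le (dot_self_nonneg _)
    have h6 : ε / 2 * (x k ⬝ᵥ x k) ≤ ε * (x k ⬝ᵥ x k) :=
      mul_le_mul_of_nonneg_right (by linarith) (dot_self_nonneg (x k))
    linarith
  have hpart : ∀ N, x N ⬝ᵥ (X N *ᵥ x N) + (ε / 2) * (∑ k ∈ Finset.range N, x k ⬝ᵥ x k)
      ≤ cw * (∑ k ∈ Finset.range N, w k ⬝ᵥ w k) := by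
    intro N
    induction N with
    | zero => simp [hV0]
    | succ N ih =>
      rw [Finset.sum_range_succ, Finset.sum_range_succ]
      have h := hstep N
      have h2 : (ε / 2) * (∑ k ∈ Finset.range N, x k ⬝ᵥ x k + x N ⬝ᵥ x N)
          = (ε / 2) * (∑ k ∈ Finset.range N, x k ⬝ᵥ x k) + (ε / 2) * (x N ⬝ᵥ x N) := by
        ring
      have h3 : cw * (∑ k ∈ Finset.range N, w k ⬝ᵥ w k + w N ⬝ᵥ w N)
          = cw * (∑ k ∈ Finset.range N, w k ⬝ᵥ w k) + cw * (w N ⬝ᵥ w N) := by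
        ring
      rw [h2, h3]
      linarith
  have hwws : ∀ k, (0:ℝ) ≤ w k ⬝ᵥ w k := fun k => dot_self_nonneg _
  have hpartw : ∀ N, (∑ k ∈ Finset.range N, w k ⬝ᵥ w k) ≤ ∑' k, w k ⬝ᵥ w k :=
    fun N => Summable.sum_le_tsum (Finset.range N) (fun i _ => hwws i) hsum
  have hxs : Summable (fun k => x k ⬝ᵥ x k) := by
    apply summable_of_sum_range_le (c := (2 / ε) * (cw * ∑' k, w k ⬝ᵥ w k))
      (fun k => dot_self_nonneg _)
    intro N
    have h1 := hpart N
    have h2 := hpartw N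
    have h3 := hVnn N
    have h4 : cw * (∑ k ∈ Finset.range N, w k ⬝ᵥ w k) ≤ cw * ∑' k, w k ⬝ᵥ w k :=
      mul_le_mul_of_nonneg_left h2 hcw.le
    have h5 : (ε / 2) * (∑ k ∈ Finset.range N, x k ⬝ᵥ x k) ≤ cw * ∑' k, w k ⬝ᵥ w k := by
      have h0 : (ε / 2) * (∑ k ∈ Finset.range N, x k ⬝ᵥ x k)
          ≤ cw * (∑ k ∈ Finset.range N, w k ⬝ᵥ w k) := by linarith
      exact le_trans h0 h4
    have hε2 : (0:ℝ) < ε / 2 := by positivity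
    calc ∑ k ∈ Finset.range N, x k ⬝ᵥ x k
        = (2 / ε) * ((ε / 2) * (∑ k ∈ Finset.range N, x k ⬝ᵥ x k)) := by
          field_simp
      _ ≤ (2 / ε) * (cw * ∑' k, w k ⬝ᵥ w k) :=
          mul_le_mul_of_nonneg_left h5 (by positivity)
  -- summability of the performance terms
  have hKt : ∀ k, |Sum.elim (w k) (z k) ⬝ᵥ (Pm k *ᵥ Sum.elim (w k) (z k))|
      ≤ K * (x k ⬝ᵥ x k + w k ⬝ᵥ w k) := by
    intro k
    have h := hKb k (x k) (w k)
    rw [← hout k] at h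
    exact h
  have hKsum : Summable (fun k => K * (x k ⬝ᵥ x k + w k ⬝ᵥ w k)) :=
    (hxs.add hsum).mul_left K
  have habs : Summable (fun k => |Sum.elim (w k) (z k) ⬝ᵥ (Pm k *ᵥ Sum.elim (w k) (z k))|) :=
    Summable.of_nonneg_of_le (fun k => abs_nonneg _) hKt hKsum
  have hssum : Summable (fun k => Sum.elim (w k) (z k) ⬝ᵥ (Pm k *ᵥ Sum.elim (w k) (z k))) :=
    summable_abs_iff.mp habs
  refine ⟨hssum, ?_⟩
  -- final telescoping estimate
  have hptw : ∀ k, Sum.elim (w k) (z k) ⬝ᵥ (Pm k *ᵥ Sum.elim (w k) (z k))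
      + ε * (w k ⬝ᵥ w k)
      ≤ x k ⬝ᵥ (X k *ᵥ x k) - x (k + 1) ⬝ᵥ (X (k + 1) *ᵥ x (k + 1)) := by
    intro k
    have h1 := hms k
    have h2 : 0 ≤ ε * (x k ⬝ᵥ x k) := mul_nonneg hε.le (dot_self_nonneg _)
    linarith
  have hpsum : ∀ N, ∑ k ∈ Finset.range N,
      (Sum.elim (w k) (z k) ⬝ᵥ (Pm k *ᵥ Sum.elim (w k) (z k)) + ε * (w k ⬝ᵥ w k)) ≤ 0 := by
    intro N
    calc ∑ k ∈ Finset.range N,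
        (Sum.elim (w k) (z k) ⬝ᵥ (Pm k *ᵥ Sum.elim (w k) (z k)) + ε * (w k ⬝ᵥ w k))
        ≤ ∑ k ∈ Finset.range N,
            (x k ⬝ᵥ (X k *ᵥ x k) - x (k + 1) ⬝ᵥ (X (k + 1) *ᵥ x (k + 1))) :=
          Finset.sum_le_sum fun k _ => hptw k
      _ = x 0 ⬝ᵥ (X 0 *ᵥ x 0) - x N ⬝ᵥ (X N *ᵥ x N) :=
          Finset.sum_range_sub' (fun k => x k ⬝ᵥ (X k *ᵥ x k)) N
      _ ≤ 0 := by
          have := hVnn N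
          rw [hV0]
          linarith
  have hsum2 : Summable (fun k =>
      Sum.elim (w k) (z k) ⬝ᵥ (Pm k *ᵥ Sum.elim (w k) (z k)) + ε * (w k ⬝ᵥ w k)) :=
    hssum.add (hsum.mul_left ε)
  have hts := Summable.tsum_le_of_sum_range_le hsum2 hpsum
  rw [Summable.tsum_add hssum (hsum.mul_left ε), tsum_mul_left] at hts
  exact hts
end
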